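/- arXiv:1801.10268 — 5 statements merged into one kernel-verified Lean document; each statement's English description precedes it below -/
import Mathlib

section
/- For any R-submodule U of V, |V| = |U| · |U^⊥|, where U^⊥ = {v ∈ V : f(v,U)=0}. -/
set_option linter.unusedSectionVars false

section
variable (R : Type) [CommRing R] [IsLocalRing R] [IsPrincipalIdealRing R] [Finite R]

noncomputable def pi : R :=
  Submodule.IsPrincipal.generator (IsLocalRing.maximalIdeal R)

lemma span_pi : Ideal.span {pi R} = IsLocalRing.maximalIdeal R :=
  Submodule.IsPrincipal.span_singleton_generator _

lemma ex_nilp : ∃ n, pi R ^ n = 0 := by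
  obtain ⟨n, hn⟩ := IsArtinianRing.isNilpotent_jacobson_bot (R := R)
  refine ⟨n, ?_⟩
  have h1 : Ideal.jacobson (⊥ : Ideal R) = IsLocalRing.maximalIdeal R :=
    IsLocalRing.jacobson_eq_maximalIdeal ⊥ bot_ne_top
  have : pi R ∈ IsLocalRing.maximalIdeal R := by
    rw [← span_pi]; exact Ideal.subset_span rfl
  have : (pi R)^n ∈ (IsLocalRing.maximalIdeal R)^n := Ideal.pow_mem_pow this n
  rw [← h1, hn] at this
  simpa using this

lemma elem_form (n : ℕ) (hn : pi R ^ n = 0) :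
    ∀ (d : ℕ) (j : ℕ), j + d = n → ∀ a ∈ Ideal.span {pi R ^ j},
      ∃ i, ∃ u : Rˣ, a = u * pi R ^ i := by
  intro d
  induction d with
  | zero => intro j hj a ha
            refine ⟨n, 1, ?_⟩
            obtain ⟨b, hb⟩ := Ideal.mem_span_singleton'.mp ha
            simp [← hj] at hn ⊢
            rw [← hb, hn, mul_zero]
  | succ d ih =>
      intro j hj a ha
      obtain ⟨b, hb⟩ := Ideal.mem_span_singleton'.mp ha
      by_cases hu : IsUnit b
      · exact ⟨j, hu.unit, by rw [← hb]; simp [IsUnit.unit_spec]⟩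
      · have hbm : b ∈ IsLocalRing.maximalIdeal R := hu
        rw [← span_pi] at hbm
        obtain ⟨c, hc⟩ := Ideal.mem_span_singleton'.mp hbm
        have : a ∈ Ideal.span {pi R ^ (j+1)} := by
          refine Ideal.mem_span_singleton'.mpr ⟨c, ?_⟩
          rw [← hb, ← hc]; ring
        exact ih (j+1) (by omega) a this

lemma elem_form' : ∀ a : R, ∃ i, ∃ u : Rˣ, a = u * pi R ^ i := by
  intro a
  obtain ⟨n, hn⟩ := ex_nilp R
  exact elem_form R n hn n 0 (by omega) a (Ideal.mem_span_singleton'.mpr ⟨a, by simp⟩)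

open scoped Classical in
noncomputable def nn : ℕ := Nat.find (ex_nilp R)

open scoped Classical in
lemma pi_pow_nn : pi R ^ nn R = 0 := Nat.find_spec (ex_nilp R)

open scoped Classical in
lemma pi_pow_ne (m : ℕ) (hm : m < nn R) : pi R ^ m ≠ 0 := Nat.find_min (ex_nilp R) hm

-- annihilator fact
lemma ann_mem (j : ℕ) (hj : j ≤ nn R) (a : R) (ha : a * pi R ^ (nn R - j) = 0) :
    a ∈ Ideal.span {pi R ^ j} := by
  obtain ⟨i, u, rfl⟩ := elem_form' R a
  have h2 : (u : R) * pi R ^ (i + (nn R - j)) = 0 := by rw [pow_add, ← mul_assoc]; exact ha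
  have h3 : pi R ^ (i + (nn R - j)) = 0 := by
    have := congrArg (fun x : R => ((u⁻¹ : Rˣ) : R) * x) h2
    simpa [← mul_assoc] using this
  have hij : j ≤ i := by
    by_contra h
    exact pi_pow_ne R _ (by omega) h3
  exact Ideal.mem_span_singleton'.mpr ⟨u * pi R ^ (i - j), by rw [mul_assoc, ← pow_add]; congr 2; omega⟩

-- every ideal is span of power of pi
lemma ideal_form (I : Ideal R) : ∃ j ≤ nn R, I = Ideal.span {pi R ^ j} := by
  obtain ⟨a, ha⟩ := (IsPrincipalIdealRing.principal I).principal
  obtain ⟨i, u, rfl⟩ := elem_form' R a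
  have hI : I = Ideal.span {pi R ^ i} := by
    rw [ha]
    ext x
    simp only [Ideal.submodule_span_eq, Ideal.mem_span_singleton']
    constructor
    · rintro ⟨b, rfl⟩; exact ⟨b * u, by ring⟩
    · rintro ⟨b, rfl⟩; exact ⟨b * u⁻¹, by linear_combination (b * pi R ^ i) * Units.inv_mul u⟩
  by_cases h : i ≤ nn R
  · exact ⟨i, h, hI⟩
  · refine ⟨nn R, le_rfl, ?_⟩
    have h1 : pi R ^ i = 0 := by
      have := pi_pow_nn R
      calc pi R ^ i = pi R ^ nn R * pi R ^ (i - nn R) := by rw [← pow_add]; congr 1; omega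
      _ = 0 := by rw [this, zero_mul]
    rw [hI, h1, pi_pow_nn R]

lemma baer_R : Module.Baer R R := by
  intro I g
  obtain ⟨j, hj, rfl⟩ := ideal_form R I
  have hmem : pi R ^ j ∈ Ideal.span {pi R ^ j} := Ideal.subset_span rfl
  set a : R := g ⟨pi R ^ j, hmem⟩ with ha
  have hann : a * pi R ^ (nn R - j) = 0 := by
    have : (pi R ^ (nn R - j)) • (⟨pi R ^ j, hmem⟩ : Ideal.span {pi R ^ j}) = 0 := by
      ext
      simp only [SetLike.mk_smul_mk, smul_eq_mul, ZeroMemClass.coe_zero]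
      rw [← pow_add]
      calc pi R ^ (nn R - j + j) = pi R ^ nn R := by congr 1; omega
      _ = 0 := pi_pow_nn R
    have := congrArg g this
    rw [map_smul, map_zero] at this
    rw [ha, mul_comm]
    simpa using this
  obtain ⟨b, hb⟩ := Ideal.mem_span_singleton'.mp (ann_mem R j hj a hann)
  refine ⟨b • LinearMap.id, ?_⟩
  intro x hx
  obtain ⟨c, hc⟩ := Ideal.mem_span_singleton'.mp hx
  have hsm : (⟨x, hx⟩ : Ideal.span {pi R ^ j}) = c • ⟨pi R ^ j, hmem⟩ := by
    ext; simp [← hc]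
  rw [hsm, map_smul]
  simp only [LinearMap.smul_apply, LinearMap.id_coe, id_eq, smul_eq_mul]
  rw [← ha, ← hb, ← hc]; ring


lemma mk_eq_smul_one {S : Type} [CommRing S] (I : Ideal S) (r : S) :
    Ideal.Quotient.mk I r = r • Ideal.Quotient.mk I 1 := by
  have h : (Ideal.Quotient.mk I 1) = Submodule.Quotient.mk (1:S) := rfl
  rw [h, ← Submodule.Quotient.mk_smul, smul_eq_mul, mul_one]
  rfl

lemma liftQ_mk_one {S : Type} [CommRing S] (I : Ideal S) (a : S)
    (hle : I ≤ LinearMap.ker (LinearMap.toSpanSingleton S S a)) :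
    (Submodule.liftQ I (LinearMap.toSpanSingleton S S a) hle) (Ideal.Quotient.mk I 1) = a := by
  have h : (Ideal.Quotient.mk I 1) = Submodule.Quotient.mk (1:S) := rfl
  rw [h, Submodule.liftQ_apply]
  simp

instance finHom (M : Type) [AddCommGroup M] [Module R M] [Finite M] :
    Finite (M →ₗ[R] R) :=
  Finite.of_injective (fun g => (g : M → R)) DFunLike.coe_injective

lemma card_hom_quot (I : Ideal R) :
    Nat.card ((R ⧸ I) →ₗ[R] R) = Nat.card (R ⧸ I) := by
  obtain ⟨k, hk, rfl⟩ := ideal_form R I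
  set n := nn R with hn
  set p := pi R with hp
  set ev : ((R ⧸ Ideal.span {p ^ k}) →ₗ[R] R) → R :=
    fun g => g (Ideal.Quotient.mk _ 1) with hev
  have hinj : Function.Injective ev := by
    intro g1 g2 h
    apply LinearMap.ext
    intro x
    obtain ⟨r, rfl⟩ := Ideal.Quotient.mk_surjective x
    rw [mk_eq_smul_one, map_smul, map_smul]
    exact congrArg (r • ·) h
  have hrange : Set.range ev = {a : R | a * p ^ k = 0} := by
    ext a
    constructor
    · rintro ⟨g, rfl⟩
      have h0 : (Ideal.Quotient.mk (Ideal.span {p ^ k})) (p ^ k) = 0 :=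
        Ideal.Quotient.eq_zero_iff_mem.mpr (Ideal.subset_span rfl)
      have heq : ev g * p ^ k = g ((Ideal.Quotient.mk _) (p ^ k)) := by
        rw [mk_eq_smul_one, map_smul, smul_eq_mul, mul_comm]
      rw [Set.mem_setOf_eq, heq, h0, map_zero]
    · intro ha
      have hle : Ideal.span {p ^ k} ≤ LinearMap.ker (LinearMap.toSpanSingleton R R a) := by
        rw [Ideal.span_le]
        rintro x rfl
        simp only [SetLike.mem_coe, LinearMap.mem_ker, LinearMap.toSpanSingleton_apply,
          smul_eq_mul]
        rw [mul_comm]; exact ha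
      exact ⟨Submodule.liftQ _ _ hle, liftQ_mk_one _ a hle⟩
  have h1 : Nat.card ((R ⧸ Ideal.span {p ^ k}) →ₗ[R] R)
      = Nat.card {a : R | a * p ^ k = 0} := by
    rw [← hrange]
    exact Nat.card_congr (Equiv.ofInjective ev hinj)
  have h2 : {a : R | a * p ^ k = 0} = (Ideal.span {p ^ (n - k)} : Ideal R) := by
    ext a
    constructor
    · intro ha
      refine ann_mem R (n - k) (by omega) a ?_
      have h : n - (n - k) = k := by omega
      rw [h]; exact ha
    · rintro ha
      obtain ⟨b, rfl⟩ := Ideal.mem_span_singleton'.mp ha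
      simp only [Set.mem_setOf_eq]
      rw [mul_assoc, ← pow_add]
      have h : n - k + k = n := by omega
      have hpn : p ^ n = 0 := pi_pow_nn R
      rw [h, hpn, mul_zero]
  have h3 : Nat.card (Ideal.span {p ^ (n - k)} : Ideal R)
      = Nat.card (R ⧸ Ideal.span {p ^ k}) := by
    have hker : LinearMap.ker (LinearMap.toSpanSingleton R R (p ^ (n - k)))
        = Ideal.span {p ^ k} := by
      ext x
      simp only [LinearMap.mem_ker, LinearMap.toSpanSingleton_apply, smul_eq_mul]
      constructor
      · intro hx
        exact ann_mem R k hk x hx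
      · intro hx
        obtain ⟨b, rfl⟩ := Ideal.mem_span_singleton'.mp hx
        rw [mul_assoc, ← pow_add]
        have h : k + (n - k) = n := by omega
        have hpn : p ^ n = 0 := pi_pow_nn R
        rw [h, hpn, mul_zero]
    have e1 := LinearMap.quotKerEquivRange (LinearMap.toSpanSingleton R R (p ^ (n - k)))
    rw [hker] at e1
    have e2 : LinearMap.range (LinearMap.toSpanSingleton R R (p ^ (n - k)))
        = (Ideal.span {p ^ (n - k)} : Ideal R) := by
      rw [← Ideal.submodule_span_eq]
      exact (LinearMap.span_singleton_eq_range R R _).symm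
    rw [← e2]
    exact (Nat.card_congr e1.toEquiv).symm
  rw [h1, Nat.card_congr (Equiv.setCongr h2)]
  exact h3

lemma card_hom_cyclic (M : Type) [AddCommGroup M] [Module R M] [Finite M] (m : M) :
    Nat.card ((R ∙ m) →ₗ[R] R) = Nat.card (R ∙ m) := by
  have e := Ideal.quotTorsionOfEquivSpanSingleton R M m
  have e2 : ((R ⧸ Ideal.torsionOf R M m) →ₗ[R] R) ≃ₗ[R] ((R ∙ m) →ₗ[R] R) := e.arrowCongr (LinearEquiv.refl R R)
  calc Nat.card ((R ∙ m) →ₗ[R] R)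
      = Nat.card ((R ⧸ Ideal.torsionOf R M m) →ₗ[R] R) := (Nat.card_congr e2.toEquiv).symm
    _ = Nat.card (R ⧸ Ideal.torsionOf R M m) := card_hom_quot R _
    _ = Nat.card (R ∙ m) := Nat.card_congr e.toEquiv

lemma card_hom_aux : ∀ (c : ℕ) (M : Type) [AddCommGroup M] [Module R M] [Finite M],
    Nat.card M ≤ c → Nat.card (M →ₗ[R] R) = Nat.card M := by
  intro c
  induction c with
  | zero =>
    intro M _ _ _ h
    have := Nat.card_pos (α := M)
    omega
  | succ c ih =>
    intro M _ _ _ hle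
    rcases subsingleton_or_nontrivial M with hM | hM
    · have h1 : Nat.card M = 1 := Nat.card_eq_one_iff_unique.mpr ⟨hM, ⟨0⟩⟩
      have h2 : Nat.card (M →ₗ[R] R) = 1 := by
        refine Nat.card_eq_one_iff_unique.mpr ⟨⟨fun g1 g2 => ?_⟩, ⟨0⟩⟩
        ext x
        rw [Subsingleton.elim x (0 : M), map_zero, map_zero]
      rw [h1, h2]
    · obtain ⟨m, hm⟩ := exists_ne (0 : M)
      set C : Submodule R M := R ∙ m with hC
      have hfinQ : Finite (M ⧸ C) := Finite.of_surjective _ (Submodule.mkQ_surjective C)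
      set res : (M →ₗ[R] R) →ₗ[R] (C →ₗ[R] R) := LinearMap.domRestrict' C with hres
      have hsurj : Function.Surjective res := by
        intro g
        obtain ⟨h, hh⟩ := ((baer_R R).injective).out C.subtype
          (Submodule.injective_subtype C) g
        exact ⟨h, by ext x; exact hh x⟩
      have hkerE : ((M ⧸ C) →ₗ[R] R) ≃ (LinearMap.ker res) := by
        refine ⟨fun g => ⟨g ∘ₗ C.mkQ, ?_⟩,
                fun h => C.liftQ h.1 ?_, ?_, ?_⟩
        · rw [LinearMap.mem_ker]
          ext x
          simp only [hres, LinearMap.domRestrict'_apply, LinearMap.comp_apply,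
            LinearMap.zero_apply]
          rw [show C.mkQ (x : M) = 0 from (Submodule.Quotient.mk_eq_zero C).mpr x.2, map_zero]
        · intro x hx
          have h2 := h.2
          rw [LinearMap.mem_ker] at h2
          have h3 := congrFun (congrArg (fun (g : (C →ₗ[R] R)) => (g : C → R)) h2) ⟨x, hx⟩
          simp only [hres, LinearMap.domRestrict'_apply, LinearMap.zero_apply] at h3
          exact h3
        · intro g
          apply LinearMap.ext
          intro x
          obtain ⟨y, rfl⟩ := Submodule.mkQ_surjective C x
          simp; exact Submodule.liftQ_apply _ _ _
        · intro h
          apply Subtype.ext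
          apply LinearMap.ext
          intro x
          simp; exact Submodule.liftQ_apply _ _ _
      have hcardC : 2 ≤ Nat.card C := by
        have : Nontrivial C := ⟨⟨⟨m, Submodule.mem_span_singleton_self m⟩, 0, by
          simp only [ne_eq, Submodule.mk_eq_zero]
          exact hm⟩⟩
        have := Finite.one_lt_card_iff_nontrivial (α := C) |>.mpr this
        omega
      have hQ : Nat.card M = Nat.card C * Nat.card (M ⧸ C) :=
        Submodule.card_eq_card_quotient_mul_card C
      have hQle : Nat.card (M ⧸ C) ≤ c := by
        have h2 : 2 * Nat.card (M ⧸ C) ≤ Nat.card C * Nat.card (M ⧸ C) :=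
          Nat.mul_le_mul_right _ hcardC
        have := Nat.card_pos (α := M ⧸ C)
        omega
      have hQcard : Nat.card ((M ⧸ C) →ₗ[R] R) = Nat.card (M ⧸ C) := ih (M ⧸ C) hQle
      have h5 : Nat.card (M →ₗ[R] R)
          = Nat.card (LinearMap.ker res) * Nat.card ((M →ₗ[R] R) ⧸ LinearMap.ker res) :=
        Submodule.card_eq_card_quotient_mul_card _
      have h6 : Nat.card ((M →ₗ[R] R) ⧸ LinearMap.ker res) = Nat.card (C →ₗ[R] R) := by
        calc Nat.card ((M →ₗ[R] R) ⧸ LinearMap.ker res)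
            = Nat.card (LinearMap.range res) :=
              Nat.card_congr (LinearMap.quotKerEquivRange res).toEquiv
          _ = Nat.card (C →ₗ[R] R) := by
              rw [LinearMap.range_eq_top.mpr hsurj]
              exact Nat.card_congr Submodule.topEquiv.toEquiv
      rw [h5, ← Nat.card_congr hkerE, h6, hQcard, card_hom_cyclic, ← hC, hQ, mul_comm]

lemma card_hom (M : Type) [AddCommGroup M] [Module R M] [Finite M] :
    Nat.card (M →ₗ[R] R) = Nat.card M :=
  card_hom_aux R (Nat.card M) M le_rfl
end

theorem stmt15
    (R : Type) [CommRing R] [IsLocalRing R] [IsPrincipalIdealRing R] [Finite R]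
    (V : Type) [AddCommGroup V] [Module R V] [Finite V]
    (f : V →ₗ[R] V →ₗ[R] R)
    (halt : ∀ v : V, f v v = 0)
    (hnd : Function.Bijective fun v : V => (f v : V →ₗ[R] R)) :
    ∀ U : Submodule R V,
      Nat.card V = Nat.card U * Nat.card {v : V | ∀ u ∈ U, f v u = 0} := by
  intro U
  set φ : V →ₗ[R] (U →ₗ[R] R) := (LinearMap.domRestrict' U) ∘ₗ f with hφ
  have hsurj : Function.Surjective φ := by
    intro g
    obtain ⟨h, hh⟩ := ((baer_R R).injective).out U.subtype (Submodule.injective_subtype U) g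
    obtain ⟨v, hv⟩ := hnd.surjective h
    refine ⟨v, ?_⟩
    apply LinearMap.ext
    intro u
    have hfv : f v = h := hv
    simp only [hφ, LinearMap.comp_apply, LinearMap.domRestrict'_apply, hfv]
    exact hh u
  have hkerset : {v : V | ∀ u ∈ U, f v u = 0} = (LinearMap.ker φ : Set V) := by
    ext v
    simp only [Set.mem_setOf_eq, SetLike.mem_coe, LinearMap.mem_ker]
    constructor
    · intro hv
      apply LinearMap.ext
      intro u
      simp only [hφ, LinearMap.comp_apply, LinearMap.domRestrict'_apply, LinearMap.zero_apply]
      exact hv u u.2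
    · intro hv u hu
      have := congrFun (congrArg (fun (g : (U →ₗ[R] R)) => (g : U → R)) hv) ⟨u, hu⟩
      simpa [hφ] using this
  have h1 : Nat.card V = Nat.card (LinearMap.ker φ) * Nat.card (V ⧸ LinearMap.ker φ) :=
    Submodule.card_eq_card_quotient_mul_card _
  have h2 : Nat.card (V ⧸ LinearMap.ker φ) = Nat.card (U →ₗ[R] R) := by
    calc Nat.card (V ⧸ LinearMap.ker φ)
        = Nat.card (LinearMap.range φ) :=
          Nat.card_congr (LinearMap.quotKerEquivRange φ).toEquiv
      _ = Nat.card (U →ₗ[R] R) := by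
          rw [LinearMap.range_eq_top.mpr hsurj]
          exact Nat.card_congr Submodule.topEquiv.toEquiv
  have h3 : Nat.card (U →ₗ[R] R) = Nat.card U := card_hom R U
  have h4 : Nat.card {v : V | ∀ u ∈ U, f v u = 0} = Nat.card (LinearMap.ker φ) :=
    Nat.card_congr (Equiv.setCongr hkerset)
  rw [h1, h2, h3, h4, mul_comm]
end

section
/- For 1 ≤ j ≤ 2ℓ-1, one has |N∩(1+r)| / |N∩(1+r^j)| = q^{(j-1)/2} if j is odd and q^{j/2} if j is even. -/
open Polynomial

noncomputable section

variable (R : Type) [CommRing R] [IsLocalRing R] [IsPrincipalIdealRing R] [Finite R]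
variable (p : R) (ℓ q : ℕ)

/-- The ramified extension `A = R[X]/(X² - p, X^{2ℓ-1})`. -/
abbrev Aext : Type :=
  Polynomial R ⧸ Ideal.span ({X ^ 2 - C p, X ^ (2 * ℓ - 1)} : Set (Polynomial R))

/-- The image `π` of `X` in `A`. -/
def piA : Aext R p ℓ :=
  Ideal.Quotient.mk (Ideal.span ({X ^ 2 - C p, X ^ (2 * ℓ - 1)} : Set (Polynomial R))) X

section Helpers

set_option linter.unusedSectionVars false

section RsideAll
variable {R : Type} [CommRing R] [IsLocalRing R] [Finite R]
variable {p : R} {ℓ q : ℕ}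

lemma hp0 (hnil : Ideal.span {p} ^ ℓ = (⊥ : Ideal R)) : p ^ ℓ = 0 := by
  have := hnil
  rw [Ideal.span_singleton_pow, Ideal.span_singleton_eq_bot] at this
  exact this

lemma two_unit (hq : Nat.card (IsLocalRing.ResidueField R) = q) (hodd : Odd q) :
    IsUnit (2 : R) := by
  by_contra h2
  have hmem : (2 : R) ∈ IsLocalRing.maximalIdeal R := h2
  have h20 : (2 : IsLocalRing.ResidueField R) = 0 := by
    have h1 : IsLocalRing.residue R 2 = 0 := Ideal.Quotient.eq_zero_iff_mem.2 hmem
    have h2 : IsLocalRing.residue R 2 = (2 : IsLocalRing.ResidueField R) := map_ofNat _ 2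
    rw [← h2, h1]
  obtain ⟨m, hm⟩ := hodd
  have hq0 : (q : IsLocalRing.ResidueField R) = 0 := by
    have := card_nsmul_eq_zero' (x := (1 : IsLocalRing.ResidueField R))
    rw [hq] at this
    simpa [nsmul_eq_mul] using this
  rw [hm] at hq0
  push_cast at hq0
  rw [h20] at hq0
  simp at hq0

lemma val_lemma (hmax : IsLocalRing.maximalIdeal R = Ideal.span {p})
    (hnil : Ideal.span {p} ^ ℓ = (⊥ : Ideal R)) {z : R} (hz : z ≠ 0) :
    ∃ m u, IsUnit u ∧ z = u * p ^ m := by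
  have hex : ∃ n, z ∉ Ideal.span {p} ^ (n + 1) := by
    refine ⟨ℓ - 1, ?_⟩
    intro h
    have hle : Ideal.span {p} ^ (ℓ - 1 + 1) ≤ Ideal.span {p} ^ ℓ :=
      Ideal.pow_le_pow_right (Nat.le_add_of_sub_le le_rfl) -- ℓ ≤ ℓ-1+1
    rw [hnil] at hle
    exact hz (by simpa using hle h)
  classical
  let m := Nat.find hex
  have hnot : z ∉ Ideal.span {p} ^ (m + 1) := Nat.find_spec hex
  have hmem : z ∈ Ideal.span {p} ^ m := by
    rcases Nat.eq_zero_or_pos m with h0 | h0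
    · rw [h0]; simp
    · have := Nat.find_min hex (m := m - 1) (by omega)
      simpa [Nat.sub_add_cancel h0] using not_not.1 this
  rw [Ideal.span_singleton_pow, Ideal.mem_span_singleton] at hmem
  obtain ⟨y, hy⟩ := hmem
  refine ⟨m, y, ?_, by rw [hy, mul_comm]⟩
  by_contra hy'
  have : y ∈ IsLocalRing.maximalIdeal R := hy'
  rw [hmax, Ideal.mem_span_singleton] at this
  obtain ⟨c, hc⟩ := this
  apply hnot
  rw [Ideal.span_singleton_pow, Ideal.mem_span_singleton]
  exact ⟨c, by rw [hy, hc, pow_succ]; ring⟩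

lemma ann_lemma (hmax : IsLocalRing.maximalIdeal R = Ideal.span {p})
    (hnil : Ideal.span {p} ^ ℓ = (⊥ : Ideal R))
    (hnil' : Ideal.span {p} ^ (ℓ - 1) ≠ (⊥ : Ideal R))
    {m : ℕ} {z : R} (h : p ^ m * z = 0) : z ∈ Ideal.span {p} ^ (ℓ - m) := by
  rcases eq_or_ne z 0 with rfl | hz
  · exact Ideal.zero_mem _
  obtain ⟨n, u, hu, rfl⟩ := val_lemma hmax hnil hz
  rw [Ideal.span_singleton_pow, Ideal.mem_span_singleton]
  have hpn : p ^ (m + n) = 0 := by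
    obtain ⟨v, hv⟩ := hu.exists_left_inv
    have : v * (p ^ m * (u * p ^ n)) = 0 := by rw [h, mul_zero]
    calc p ^ (m+n) = v * u * (p ^ m * p ^ n) := by rw [hv, pow_add]; ring
    _ = 0 := by rw [← this]; ring
  have hge : ℓ ≤ m + n := by
    by_contra hlt
    apply hnil'
    rw [Ideal.span_singleton_pow, Ideal.span_singleton_eq_bot]
    have : p ^ (ℓ - 1) = p ^ (m + n) * p ^ (ℓ - 1 - (m + n)) := by
      rw [← pow_add]; congr 1; omega
    rw [this, hpn, zero_mul]
  refine ⟨u * p ^ (n - (ℓ - m)), ?_⟩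
  have hsplit : p ^ n = p ^ (ℓ - m) * p ^ (n - (ℓ - m)) := by
    rw [← pow_add]; congr 1; omega
  rw [hsplit]; ring



lemma nil_of_mem (hnil : Ideal.span {p} ^ ℓ = (⊥ : Ideal R)) {x : R}
    (hx : x ∈ Ideal.span {p}) : IsNilpotent x := by
  refine ⟨ℓ, ?_⟩
  have : x ^ ℓ ∈ Ideal.span {p} ^ ℓ := Ideal.pow_mem_pow hx ℓ
  rw [hnil] at this
  simpa using this

lemma sqrt_lemma (hℓ : 1 ≤ ℓ) (hnil : Ideal.span {p} ^ ℓ = (⊥ : Ideal R))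
    (h2 : IsUnit (2 : R)) {c : R} (hc : c ∈ Ideal.span {p}) :
    ∃ d, d ∈ Ideal.span {c} ∧ (1 + d) * (1 + d) = 1 + c := by
  have key : ∀ n, 1 ≤ n → ∃ d, d ∈ Ideal.span {p} ∧
      (1 + d) * (1 + d) - (1 + c) ∈ Ideal.span {p} ^ n := by
    intro n hn
    induction n with
    | zero => omega
    | succ n ih =>
      rcases Nat.eq_zero_or_pos n with rfl | hn'
      · exact ⟨0, Ideal.zero_mem _, by simpa using neg_mem hc⟩
      obtain ⟨d, hd, he⟩ := ih hn'
      have hdu : IsUnit (1 + d) := (nil_of_mem hnil hd).isUnit_one_add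
      have huu : IsUnit (2 * (1 + d)) := h2.mul hdu
      obtain ⟨w, hw⟩ := huu.exists_right_inv
      set e := (1 + d) * (1 + d) - (1 + c) with hedef
      refine ⟨d - e * w, ?_, ?_⟩
      · refine Ideal.sub_mem _ hd (Ideal.mul_mem_right _ _ ?_)
        have : Ideal.span {p} ^ n ≤ Ideal.span {p} ^ 1 := Ideal.pow_le_pow_right hn'
        simpa using this he
      · have hexp : (1 + (d - e * w)) * (1 + (d - e * w)) - (1 + c)
            = e - (2 * (1 + d) * w) * e + e * e * (w * w) := by
          rw [hedef]; ring
        rw [hexp, hw, one_mul, sub_self, zero_add]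
        have : e * e ∈ Ideal.span {p} ^ (n + n) := by
          rw [pow_add]; exact Ideal.mul_mem_mul he he
        have hle : Ideal.span {p} ^ (n + n) ≤ Ideal.span {p} ^ (n + 1) :=
          Ideal.pow_le_pow_right (by omega)
        exact Ideal.mul_mem_right _ _ (hle this)
  obtain ⟨d, hd, he⟩ := key ℓ hℓ
  rw [hnil] at he
  have heq : (1 + d) * (1 + d) = 1 + c := by
    have := (Submodule.mem_bot R).1 he
    linear_combination this
  have h2d : IsUnit (2 + d) := (nil_of_mem hnil hd).isUnit_add_left_of_commute h2 (Commute.all _ _)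
  obtain ⟨w, hw⟩ := h2d.exists_right_inv
  refine ⟨d, Ideal.mem_span_singleton.2 ⟨w, ?_⟩, heq⟩
  have hdc : d * (2 + d) = c := by linear_combination heq
  calc d = d * ((2 + d) * w) := by rw [hw, mul_one]
  _ = c * w := by rw [← mul_assoc, hdc]


end RsideAll

section Poly
variable {R : Type} [CommRing R] {p : R} {ℓ : ℕ}
lemma monic_dvd_zero {R : Type} [CommRing R] {g f : Polynomial R} (hg : g.Monic) (h : g ∣ f)
    (hlt : f.degree < g.degree) : f = 0 := by
  by_contra hf
  obtain ⟨c, rfl⟩ := h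
  have hc : c ≠ 0 := right_ne_zero_of_mul hf
  rw [mul_comm, hg.degree_mul] at hlt
  exact absurd hlt (not_lt.2 (le_add_of_nonneg_left (zero_le_degree_iff.2 hc)))


lemma poly_key [Nontrivial R] (hℓ : 1 ≤ ℓ) (hp0 : p ^ ℓ = 0) {a b : R}
    (h : C a + C b * X ∈ Ideal.span ({X ^ 2 - C p, X ^ (2 * ℓ - 1)} : Set (Polynomial R))) :
    a = 0 ∧ ∃ c, b = p ^ (ℓ - 1) * c := by
  obtain ⟨g, h', hgh⟩ := Ideal.mem_span_pair.1 h
  have hmon : (X ^ 2 - C p).Monic := monic_X_pow_sub_C p two_ne_zero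
  obtain ⟨w, hw⟩ : (X ^ 2 - C p) ∣ ((X ^ 2) ^ (ℓ - 1) - (C p) ^ (ℓ - 1)) :=
    sub_dvd_pow_sub_pow _ _ _
  have h2 : (X : Polynomial R) ^ (2 * ℓ - 1) = (X ^ 2 - C p) * w * X + C (p ^ (ℓ - 1)) * X := by
    have hX : (X : Polynomial R) ^ (2 * ℓ - 1) = (X ^ 2) ^ (ℓ - 1) * X := by
      rw [← pow_mul, ← pow_succ]; congr 1; omega
    rw [hX, map_pow]
    linear_combination X * hw
  have h3 : (X ^ 2 - C p) * (h' /ₘ (X ^ 2 - C p)) + (C ((h' %ₘ (X ^ 2 - C p)).coeff 1) * X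
      + C ((h' %ₘ (X ^ 2 - C p)).coeff 0)) = h' := by
    conv_rhs => rw [← modByMonic_add_div h' (X ^ 2 - C p)]
    rw [← eq_X_add_C_of_degree_le_one (by
      have hd := degree_modByMonic_lt h' hmon
      rw [degree_X_pow_sub_C (by norm_num) p] at hd
      rcases hdeg : (h' %ₘ (X ^ 2 - C p)).degree with _ | n
      · exact bot_le
      · rw [hdeg, WithBot.some_eq_coe] at hd
        rw [WithBot.some_eq_coe]
        exact WithBot.coe_le_coe.2 (Nat.lt_succ_iff.1 (WithBot.coe_lt_coe.1 hd)))]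
    ring
  set c1 := (h' %ₘ (X ^ 2 - C p)).coeff 1
  set c0 := (h' %ₘ (X ^ 2 - C p)).coeff 0
  have hC : C (p ^ (ℓ - 1)) * C p = 0 := by
    rw [← C_mul, ← pow_succ]
    have : ℓ - 1 + 1 = ℓ := by omega
    rw [this, hp0, map_zero]
  have hdvd : (X ^ 2 - C p) ∣ (C a + C b * X - C (p ^ (ℓ - 1)) * C c0 * X) := by
    refine ⟨g + h' * w * X + C (p ^ (ℓ - 1)) * X * (h' /ₘ (X ^ 2 - C p)) + C c1 * C (p ^ (ℓ - 1)), ?_⟩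
    linear_combination (-1 : Polynomial R) * hgh + h' * h2 - (C (p ^ (ℓ - 1)) * X) * h3 + C c1 * hC
  have hzero : C a + C b * X - C (p ^ (ℓ - 1)) * C c0 * X = 0 := by
    refine monic_dvd_zero hmon hdvd ?_
    rw [degree_X_pow_sub_C (by norm_num) p]
    have h1 : C a + C b * X - C (p ^ (ℓ - 1)) * C c0 * X
        = C a + C (b - p ^ (ℓ - 1) * c0) * X := by
      rw [map_sub, map_mul]; ring
    rw [h1]
    calc (C a + C (b - p ^ (ℓ - 1) * c0) * X).degree
        ≤ max (C a).degree (C (b - p ^ (ℓ - 1) * c0) * X).degree := degree_add_le _ _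
    _ ≤ 1 := by
        refine max_le ((degree_C_le).trans (by norm_num)) ?_
        refine (degree_mul_le _ _).trans ?_
        calc (C (b - p ^ (ℓ - 1) * c0)).degree + (X : Polynomial R).degree ≤ 0 + 1 :=
              add_le_add degree_C_le degree_X_le
        _ ≤ 1 := by norm_num
    _ < 2 := by norm_num
  constructor
  · have := congrArg (fun f => Polynomial.coeff f 0) hzero
    simpa using this
  · refine ⟨c0, ?_⟩
    have := congrArg (fun f => Polynomial.coeff f 1) hzero
    simp [coeff_one] at this
    have hcoeff : (C p ^ (ℓ - 1)).coeff 0 = p ^ (ℓ - 1) := by rw [← C_pow, coeff_C_zero]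
    rw [hcoeff] at this
    linear_combination this


end Poly

variable {R p ℓ}

section Astruct

lemma algA_eq (a : R) : algebraMap R (Aext R p ℓ) a
    = Ideal.Quotient.mk (Ideal.span ({X ^ 2 - C p, X ^ (2 * ℓ - 1)} : Set (Polynomial R))) (C a) :=
  rfl

lemma q_mem1 : (X ^ 2 - C p) ∈ Ideal.span ({X ^ 2 - C p, X ^ (2 * ℓ - 1)} : Set (Polynomial R)) :=
  Ideal.subset_span (by simp)

lemma q_mem2 : (X ^ (2 * ℓ - 1)) ∈ Ideal.span ({X ^ 2 - C p, X ^ (2 * ℓ - 1)} : Set (Polynomial R)) :=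
  Ideal.subset_span (by simp)

lemma pi_sq : piA R p ℓ ^ 2 = algebraMap R (Aext R p ℓ) p := by
  have h := Ideal.Quotient.eq_zero_iff_mem.2 (q_mem1 (p := p) (ℓ := ℓ))
  rw [map_sub, sub_eq_zero, map_pow] at h
  exact h

lemma pi_top : piA R p ℓ ^ (2 * ℓ - 1) = 0 := by
  have h := Ideal.Quotient.eq_zero_iff_mem.2 (q_mem2 (p := p) (ℓ := ℓ))
  rw [map_pow] at h
  exact h

lemma pi_high (hℓ : 1 ≤ ℓ) :
    piA R p ℓ ^ (2 * ℓ - 1) = algebraMap R (Aext R p ℓ) (p ^ (ℓ - 1)) * piA R p ℓ := by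
  have h1 : piA R p ℓ ^ (2 * ℓ - 1) = piA R p ℓ ^ (2 * (ℓ - 1) + 1) := by
    congr 1
    omega
  rw [h1, pow_succ, pow_mul, pi_sq, ← map_pow]

variable [Nontrivial R]

lemma mod_repr (f : Polynomial R) : f %ₘ (X ^ 2 - C p)
    = C ((f %ₘ (X ^ 2 - C p)).coeff 1) * X + C ((f %ₘ (X ^ 2 - C p)).coeff 0) := by
  have hmon : (X ^ 2 - C p).Monic := monic_X_pow_sub_C p two_ne_zero
  refine eq_X_add_C_of_degree_le_one ?_
  have hd := degree_modByMonic_lt f hmon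
  rw [degree_X_pow_sub_C (by norm_num) p] at hd
  rcases hdeg : (f %ₘ (X ^ 2 - C p)).degree with _ | n
  · exact bot_le
  · rw [hdeg, WithBot.some_eq_coe] at hd
    rw [WithBot.some_eq_coe]
    exact WithBot.coe_le_coe.2 (Nat.lt_succ_iff.1 (WithBot.coe_lt_coe.1 hd))

lemma reprA (x : Aext R p ℓ) :
    ∃ a b : R, x = algebraMap R (Aext R p ℓ) a + algebraMap R (Aext R p ℓ) b * piA R p ℓ := by
  obtain ⟨f, rfl⟩ := Ideal.Quotient.mk_surjective x
  set Q : Polynomial R := X ^ 2 - C p with hQ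
  have hmon : Q.Monic := monic_X_pow_sub_C p two_ne_zero
  refine ⟨(f %ₘ Q).coeff 0, (f %ₘ Q).coeff 1, ?_⟩
  have hmk : Ideal.Quotient.mk (Ideal.span ({X ^ 2 - C p, X ^ (2 * ℓ - 1)} : Set (Polynomial R))) f
      = Ideal.Quotient.mk _ (f %ₘ Q) := by
    rw [Ideal.Quotient.mk_eq_mk_iff_sub_mem]
    have hmd := modByMonic_add_div f Q
    have : f - f %ₘ Q = Q * (f /ₘ Q) := by linear_combination -hmd
    rw [this]
    exact Ideal.mul_mem_right _ _ q_mem1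
  rw [hmk]
  conv_lhs => rw [mod_repr f]
  rw [map_add, map_mul, algA_eq, algA_eq]
  rw [add_comm]
  rfl

lemma finA [Finite R] : Finite (Aext R p ℓ) := by
  refine Finite.of_surjective
    (fun ab : R × R => algebraMap R (Aext R p ℓ) ab.1 + algebraMap R (Aext R p ℓ) ab.2 * piA R p ℓ)
    fun x => ?_
  obtain ⟨a, b, hab⟩ := reprA x
  exact ⟨(a, b), hab.symm⟩

lemma lin_zero (hℓ : 1 ≤ ℓ) (hp0 : p ^ ℓ = 0) {a b : R} :
    algebraMap R (Aext R p ℓ) a + algebraMap R (Aext R p ℓ) b * piA R p ℓ = 0 ↔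
      a = 0 ∧ ∃ c, b = p ^ (ℓ - 1) * c := by
  constructor
  · intro h
    refine poly_key hℓ hp0 ?_
    rw [← Ideal.Quotient.eq_zero_iff_mem, map_add, map_mul]
    exact h
  · rintro ⟨rfl, c, rfl⟩
    rw [map_zero, zero_add, mul_comm (p ^ (ℓ - 1)) c, map_mul, mul_assoc, ← pi_high hℓ, pi_top,
      mul_zero]

lemma alg_inj (hℓ : 1 ≤ ℓ) (hp0 : p ^ ℓ = 0) {a : R}
    (h : algebraMap R (Aext R p ℓ) a = 0) : a = 0 := by
  have : algebraMap R (Aext R p ℓ) a + algebraMap R (Aext R p ℓ) 0 * piA R p ℓ = 0 := by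
    rw [map_zero, zero_mul, add_zero, h]
  exact ((lin_zero hℓ hp0).1 this).1

lemma mem_even (k : ℕ) (x : Aext R p ℓ) :
    x ∈ Ideal.span {piA R p ℓ} ^ (2 * k) ↔ ∃ a b : R,
      x = algebraMap R (Aext R p ℓ) (p ^ k * a)
        + algebraMap R (Aext R p ℓ) (p ^ k * b) * piA R p ℓ := by
  have hpk : piA R p ℓ ^ (2 * k) = algebraMap R (Aext R p ℓ) (p ^ k) := by
    rw [pow_mul, pi_sq, ← map_pow]
  rw [Ideal.span_singleton_pow, Ideal.mem_span_singleton]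
  constructor
  · rintro ⟨y, rfl⟩
    obtain ⟨a, b, rfl⟩ := reprA y
    exact ⟨a, b, by rw [hpk, map_mul, map_mul]; ring⟩
  · rintro ⟨a, b, rfl⟩
    exact ⟨algebraMap R (Aext R p ℓ) a + algebraMap R (Aext R p ℓ) b * piA R p ℓ,
      by rw [hpk, map_mul, map_mul]; ring⟩

lemma odd_identity (k : ℕ) (a b : R) :
    algebraMap R (Aext R p ℓ) (p ^ k) * piA R p ℓ
      * (algebraMap R (Aext R p ℓ) a + algebraMap R (Aext R p ℓ) b * piA R p ℓ)
    = algebraMap R (Aext R p ℓ) (p ^ (k + 1) * b)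
      + algebraMap R (Aext R p ℓ) (p ^ k * a) * piA R p ℓ := by
  have hsq := pi_sq (R := R) (p := p) (ℓ := ℓ)
  calc algebraMap R (Aext R p ℓ) (p ^ k) * piA R p ℓ
      * (algebraMap R (Aext R p ℓ) a + algebraMap R (Aext R p ℓ) b * piA R p ℓ)
      = algebraMap R (Aext R p ℓ) (p ^ k) * algebraMap R (Aext R p ℓ) b * piA R p ℓ ^ 2
        + algebraMap R (Aext R p ℓ) (p ^ k) * algebraMap R (Aext R p ℓ) a * piA R p ℓ := by ring
  _ = algebraMap R (Aext R p ℓ) (p ^ k) * algebraMap R (Aext R p ℓ) b * algebraMap R (Aext R p ℓ) p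
        + algebraMap R (Aext R p ℓ) (p ^ k) * algebraMap R (Aext R p ℓ) a * piA R p ℓ := by
      rw [hsq]
  _ = _ := by
      rw [← map_mul, ← map_mul, ← map_mul]
      have h1 : p ^ k * b * p = p ^ (k + 1) * b := by ring
      rw [h1]

lemma mem_odd (k : ℕ) (x : Aext R p ℓ) :
    x ∈ Ideal.span {piA R p ℓ} ^ (2 * k + 1) ↔ ∃ a b : R,
      x = algebraMap R (Aext R p ℓ) (p ^ (k + 1) * a)
        + algebraMap R (Aext R p ℓ) (p ^ k * b) * piA R p ℓ := by
  have hpk : piA R p ℓ ^ (2 * k + 1) = algebraMap R (Aext R p ℓ) (p ^ k) * piA R p ℓ := by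
    rw [pow_succ, pow_mul, pi_sq, ← map_pow]
  rw [Ideal.span_singleton_pow, Ideal.mem_span_singleton]
  constructor
  · rintro ⟨y, rfl⟩
    obtain ⟨a, b, rfl⟩ := reprA y
    exact ⟨b, a, by rw [hpk, odd_identity]⟩
  · rintro ⟨a, b, rfl⟩
    exact ⟨algebraMap R (Aext R p ℓ) b + algebraMap R (Aext R p ℓ) a * piA R p ℓ,
      by rw [hpk, odd_identity]⟩

lemma norm_eq (σ : Aext R p ℓ →ₐ[R] Aext R p ℓ) (hσ : σ (piA R p ℓ) = - piA R p ℓ) (α β : R) :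
    (algebraMap R (Aext R p ℓ) α + algebraMap R (Aext R p ℓ) β * piA R p ℓ)
      * σ (algebraMap R (Aext R p ℓ) α + algebraMap R (Aext R p ℓ) β * piA R p ℓ)
    = algebraMap R (Aext R p ℓ) (α ^ 2 - p * β ^ 2) := by
  rw [map_add, map_mul, AlgHom.commutes, AlgHom.commutes, hσ]
  have hsq := pi_sq (R := R) (p := p) (ℓ := ℓ)
  calc (algebraMap R (Aext R p ℓ) α + algebraMap R (Aext R p ℓ) β * piA R p ℓ)
        * (algebraMap R (Aext R p ℓ) α + algebraMap R (Aext R p ℓ) β * (- piA R p ℓ))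
      = algebraMap R (Aext R p ℓ) α ^ 2 - algebraMap R (Aext R p ℓ) β ^ 2 * piA R p ℓ ^ 2 := by
        ring
  _ = _ := by rw [hsq, map_sub, map_pow, map_mul, map_pow]; ring

end Astruct

section Groups
variable [Nontrivial R] [IsLocalRing R] [Finite R]

local notation "algb" => algebraMap R (Aext R p ℓ)
local notation "πA" => piA R p ℓ

lemma add_mul_repr (α β α' β' : R) :
    (algb α + algb β * πA) * (algb α' + algb β' * πA)
      = algb (α * α' + p * (β * β')) + algb (α * β' + α' * β) * πA := by
  have hsq := pi_sq (R := R) (p := p) (ℓ := ℓ)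
  calc (algb α + algb β * πA) * (algb α' + algb β' * πA)
      = algb α * algb α' + algb β * algb β' * πA ^ 2
        + (algb α * algb β' + algb α' * algb β) * πA := by ring
  _ = algb α * algb α' + algb β * algb β' * algb p
        + (algb α * algb β' + algb α' * algb β) * πA := by rw [hsq]
  _ = _ := by
      have c1 : algb α * algb α' + algb β * algb β' * algb p = algb (α * α' + p * (β * β')) := by
        rw [← map_mul, ← map_mul, ← map_mul, ← map_add]
        exact congrArg _ (by ring)
      have c2 : algb α * algb β' + algb α' * algb β = algb (α * β' + α' * β) := by
        rw [← map_mul, ← map_mul, ← map_add]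
      rw [c1, c2]

lemma norm_extract (hℓ : 1 ≤ ℓ) (hp0 : p ^ ℓ = 0)
    (σ : Aext R p ℓ →ₐ[R] Aext R p ℓ) (hσ : σ (piA R p ℓ) = - piA R p ℓ)
    {x : Aext R p ℓ} (hx : x * σ x = 1) {α β : R}
    (hrep : x = algb α + algb β * πA) : α ^ 2 - p * β ^ 2 = 1 := by
  have h1 := norm_eq σ hσ α β
  rw [← hrep, hx] at h1
  have h2 : algb (α ^ 2 - p * β ^ 2 - 1) = 0 := by
    rw [map_sub, ← h1, map_one, sub_self]
  have := alg_inj hℓ hp0 h2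
  linear_combination this

def NN (σ : Aext R p ℓ →ₐ[R] Aext R p ℓ) (J : Ideal (Aext R p ℓ)) : Subgroup (Aext R p ℓ)ˣ where
  carrier := {a : (Aext R p ℓ)ˣ | (a : Aext R p ℓ) * σ (a : Aext R p ℓ) = 1
    ∧ (a : Aext R p ℓ) - 1 ∈ J}
  one_mem' := by simp
  mul_mem' := by
    rintro a b ⟨ha1, ha2⟩ ⟨hb1, hb2⟩
    refine ⟨?_, ?_⟩
    · rw [Units.val_mul, map_mul]
      calc (a : Aext R p ℓ) * b * (σ a * σ b) = ((a : Aext R p ℓ) * σ a) * ((b : Aext R p ℓ) * σ b) := by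
            ring
      _ = 1 := by rw [ha1, hb1, one_mul]
    · have h : ((a * b : (Aext R p ℓ)ˣ) : Aext R p ℓ) - 1
          = (a : Aext R p ℓ) * ((b : Aext R p ℓ) - 1) + ((a : Aext R p ℓ) - 1) := by
        rw [Units.val_mul]; ring
      rw [h]
      exact J.add_mem (J.mul_mem_left _ hb2) ha2
  inv_mem' := by
    rintro a ⟨ha1, ha2⟩
    refine ⟨?_, ?_⟩
    · have hinv : ((a⁻¹ : (Aext R p ℓ)ˣ) : Aext R p ℓ) * (a : Aext R p ℓ) = 1 := by
        rw [← Units.val_mul, inv_mul_cancel, Units.val_one]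
      calc ((a⁻¹ : (Aext R p ℓ)ˣ) : Aext R p ℓ) * σ ((a⁻¹ : (Aext R p ℓ)ˣ) : Aext R p ℓ)
          = ((a⁻¹ : (Aext R p ℓ)ˣ) : Aext R p ℓ) * σ ((a⁻¹ : (Aext R p ℓ)ˣ) : Aext R p ℓ)
            * ((a : Aext R p ℓ) * σ (a : Aext R p ℓ)) := by rw [ha1, mul_one]
      _ = (((a⁻¹ : (Aext R p ℓ)ˣ) : Aext R p ℓ) * (a : Aext R p ℓ))
            * σ (((a⁻¹ : (Aext R p ℓ)ˣ) : Aext R p ℓ) * (a : Aext R p ℓ)) := by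
            rw [map_mul]; ring
      _ = 1 := by rw [hinv, map_one, mul_one]
    · have hinv : ((a⁻¹ : (Aext R p ℓ)ˣ) : Aext R p ℓ) * (a : Aext R p ℓ) = 1 := by
        rw [← Units.val_mul, inv_mul_cancel, Units.val_one]
      have h : ((a⁻¹ : (Aext R p ℓ)ˣ) : Aext R p ℓ) - 1
          = - (((a⁻¹ : (Aext R p ℓ)ˣ) : Aext R p ℓ) * ((a : Aext R p ℓ) - 1)) := by
        rw [mul_sub, hinv]; ring
      rw [h]
      exact neg_mem (J.mul_mem_left _ ha2)

lemma stepA (hℓ : 1 ≤ ℓ) (hp0 : p ^ ℓ = 0)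
    (hmax : IsLocalRing.maximalIdeal R = Ideal.span {p})
    (hnil : Ideal.span {p} ^ ℓ = (⊥ : Ideal R))
    (hnil' : Ideal.span {p} ^ (ℓ - 1) ≠ (⊥ : Ideal R))
    (h2 : IsUnit (2 : R))
    (σ : Aext R p ℓ →ₐ[R] Aext R p ℓ) (hσ : σ (piA R p ℓ) = - piA R p ℓ)
    (k : ℕ) (hk1 : 1 ≤ k) (hk2 : k + 1 ≤ ℓ) :
    NN σ (Ideal.span {piA R p ℓ} ^ (2 * k)) = NN σ (Ideal.span {piA R p ℓ} ^ (2 * k + 1)) := by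
  ext x
  constructor
  · rintro ⟨h1, hm⟩
    refine ⟨h1, ?_⟩
    obtain ⟨a, b, hab⟩ := (mem_even k _).1 hm
    have hxrep : (x : Aext R p ℓ) = algb (1 + p ^ k * a) + algb (p ^ k * b) * πA := by
      rw [map_add, map_one]
      linear_combination hab
    have hnorm := norm_extract hℓ hp0 σ hσ h1 hxrep
    have h0 : p ^ k * (2 * a + p ^ k * a ^ 2 - p ^ (k + 1) * b ^ 2) = 0 := by
      have hpk : p ^ k * p ^ k = p ^ (2 * k) := by rw [← pow_add]; congr 1; omega
      have hpk2 : p ^ k * p ^ (k + 1) = p ^ (2 * k + 1) := by rw [← pow_add]; congr 1; omega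
      have e : p ^ k * (2 * a + p ^ k * a ^ 2 - p ^ (k + 1) * b ^ 2)
          = (1 + p ^ k * a) ^ 2 - p * (p ^ k * b) ^ 2 - 1 := by ring
      rw [e, hnorm, sub_self]
    have hmem := ann_lemma hmax hnil hnil' h0
    have hle : Ideal.span {p} ^ (ℓ - k) ≤ Ideal.span {p} ^ 1 :=
      Ideal.pow_le_pow_right (by omega)
    have hmem1 : 2 * a + p ^ k * a ^ 2 - p ^ (k + 1) * b ^ 2 ∈ Ideal.span {p} := by
      simpa using hle hmem
    have h2a : 2 * a ∈ Ideal.span {p} := by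
      have e : 2 * a = (2 * a + p ^ k * a ^ 2 - p ^ (k + 1) * b ^ 2)
          - p * (p ^ (k - 1) * a ^ 2) + p * (p ^ k * b ^ 2) := by
        have hk1' : p ^ (k + 1) = p * p ^ k := by rw [← pow_succ']
        have hk' : p ^ k = p * p ^ (k - 1) := by rw [← pow_succ']; congr 1; omega
        rw [hk1', hk']
        ring
      rw [e]
      refine Submodule.add_mem _ (Submodule.sub_mem _ hmem1 ?_) ?_
      · exact Ideal.mul_mem_right _ _ (Ideal.mem_span_singleton.2 dvd_rfl)
      · exact Ideal.mul_mem_right _ _ (Ideal.mem_span_singleton.2 dvd_rfl)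
    obtain ⟨v, hv⟩ := h2.exists_left_inv
    have ha : a ∈ Ideal.span {p} := by
      have : a = v * (2 * a) := by rw [← mul_assoc, hv, one_mul]
      rw [this]
      exact Ideal.mul_mem_left _ _ h2a
    obtain ⟨a1, ha1⟩ := Ideal.mem_span_singleton.1 ha
    refine (mem_odd k _).2 ⟨a1, b, ?_⟩
    rw [hab, ha1]
    have e : p ^ k * (p * a1) = p ^ (k + 1) * a1 := by ring
    rw [e]
  · rintro ⟨h1, hm⟩
    exact ⟨h1, Ideal.pow_le_pow_right (by omega) hm⟩

lemma coordU (hℓ : 1 ≤ ℓ) (hp0 : p ^ ℓ = 0)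
    (hmax : IsLocalRing.maximalIdeal R = Ideal.span {p})
    (hnil : Ideal.span {p} ^ ℓ = (⊥ : Ideal R))
    (hnil' : Ideal.span {p} ^ (ℓ - 1) ≠ (⊥ : Ideal R))
    (k : ℕ) (hk : k + 2 ≤ ℓ) {a b a' b' : R}
    (h : algb (p ^ (k + 1) * a) + algb (p ^ k * b) * πA
       = algb (p ^ (k + 1) * a') + algb (p ^ k * b') * πA) :
    b - b' ∈ Ideal.span {p} := by
  have h0 : algb (p ^ (k + 1) * (a - a')) + algb (p ^ k * (b - b')) * πA = 0 := by
    have e1 : p ^ (k + 1) * (a - a') = p ^ (k + 1) * a - p ^ (k + 1) * a' := by ring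
    have e2 : p ^ k * (b - b') = p ^ k * b - p ^ k * b' := by ring
    rw [e1, e2, map_sub, map_sub]
    linear_combination h
  obtain ⟨-, c, hc⟩ := (lin_zero hℓ hp0).1 h0
  have hpow : p ^ k * p ^ (ℓ - 1 - k) = p ^ (ℓ - 1) := by rw [← pow_add]; congr 1; omega
  have h1 : p ^ k * (b - b' - p ^ (ℓ - 1 - k) * c) = 0 := by
    linear_combination hc - c * hpow
  have hmem := ann_lemma hmax hnil hnil' h1
  have hmem1 : b - b' - p ^ (ℓ - 1 - k) * c ∈ Ideal.span {p} := by
    have hle : Ideal.span {p} ^ (ℓ - k) ≤ Ideal.span {p} ^ 1 :=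
      Ideal.pow_le_pow_right (by omega)
    simpa using hle hmem
  have e : b - b' = (b - b' - p ^ (ℓ - 1 - k) * c) + p * (p ^ (ℓ - 2 - k) * c) := by
    have : p * p ^ (ℓ - 2 - k) = p ^ (ℓ - 1 - k) := by rw [← pow_succ']; congr 1; omega
    rw [← mul_assoc, this]
    ring
  rw [e]
  exact Submodule.add_mem _ hmem1 (Ideal.mul_mem_right _ _ (Ideal.mem_span_singleton.2 dvd_rfl))


lemma mul_repr (k : ℕ) (x y : Aext R p ℓ) (a b a' b' : R)
    (hx : x - 1 = algb (p ^ (k + 1) * a) + algb (p ^ k * b) * πA)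
    (hy : y - 1 = algb (p ^ (k + 1) * a') + algb (p ^ k * b') * πA) :
    x * y - 1 = algb (p ^ (k + 1) * (a + a' + p ^ (k + 1) * (a * a') + p ^ k * (b * b')))
      + algb (p ^ k * (b + b' + p ^ (k + 1) * (a * b' + a' * b))) * πA := by
  have h1 : x * y - 1 = (x - 1) * (y - 1) + (x - 1) + (y - 1) := by ring
  rw [h1, hx, hy, add_mul_repr]
  have comb : ∀ u1 v1 u2 v2 u3 v3 : R,
      (algb u1 + algb v1 * πA) + (algb u2 + algb v2 * πA) + (algb u3 + algb v3 * πA)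
        = algb (u1 + u2 + u3) + algb (v1 + v2 + v3) * πA := by
    intro u1 v1 u2 v2 u3 v3
    rw [map_add, map_add, map_add, map_add]; ring
  rw [comb]
  congr 1
  · exact congrArg _ (by ring)
  · exact congrArg (· * πA) (congrArg _ (by ring))

lemma stepB (hℓ : 1 ≤ ℓ) (hp0 : p ^ ℓ = 0)
    (hmax : IsLocalRing.maximalIdeal R = Ideal.span {p})
    (hnil : Ideal.span {p} ^ ℓ = (⊥ : Ideal R))
    (hnil' : Ideal.span {p} ^ (ℓ - 1) ≠ (⊥ : Ideal R))
    (h2 : IsUnit (2 : R))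
    (σ : Aext R p ℓ →ₐ[R] Aext R p ℓ) (hσ : σ (piA R p ℓ) = - piA R p ℓ)
    (k : ℕ) (hk : k + 2 ≤ ℓ) :
    Nat.card ↥(NN σ (Ideal.span {piA R p ℓ} ^ (2 * k + 1)))
      = Nat.card ↥(NN σ (Ideal.span {piA R p ℓ} ^ (2 * k + 2)))
        * Nat.card (R ⧸ Ideal.span {p}) := by
  haveI : Finite (Aext R p ℓ) := finA
  set N1 := NN σ (Ideal.span {piA R p ℓ} ^ (2 * k + 1)) with hN1
  set N2 := NN σ (Ideal.span {piA R p ℓ} ^ (2 * k + 2)) with hN2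
  have hrep : ∀ x : ↥N1, ∃ a : R, ∃ b : R, ((x : (Aext R p ℓ)ˣ) : Aext R p ℓ) - 1
      = algb (p ^ (k + 1) * a) + algb (p ^ k * b) * πA := fun x => (mem_odd k _).1 x.2.2
  choose ca cb hab using hrep
  have hcb : ∀ (x : ↥N1) (a b : R), ((x : (Aext R p ℓ)ˣ) : Aext R p ℓ) - 1
      = algb (p ^ (k + 1) * a) + algb (p ^ k * b) * πA →
      Ideal.Quotient.mk (Ideal.span {p}) (cb x) = Ideal.Quotient.mk (Ideal.span {p}) b := by
    intro x a b h
    rw [Ideal.Quotient.mk_eq_mk_iff_sub_mem]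
    exact coordU hℓ hp0 hmax hnil hnil' k hk ((hab x).symm.trans h)
  set f : ↥N1 → Multiplicative (R ⧸ Ideal.span {p}) :=
    fun x => Multiplicative.ofAdd (Ideal.Quotient.mk (Ideal.span {p}) (cb x)) with hf
  have hmul : ∀ x y : ↥N1, f (x * y) = f x * f y := by
    intro x y
    have hxyc : (((x * y : ↥N1) : (Aext R p ℓ)ˣ) : Aext R p ℓ)
        = ((x : (Aext R p ℓ)ˣ) : Aext R p ℓ) * ((y : (Aext R p ℓ)ˣ) : Aext R p ℓ) := by
      rw [MulMemClass.coe_mul, Units.val_mul]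
    have hxy : (((x * y : ↥N1) : (Aext R p ℓ)ˣ) : Aext R p ℓ) - 1
        = algb (p ^ (k + 1) * (ca x + ca y + p ^ (k + 1) * (ca x * ca y) + p ^ k * (cb x * cb y)))
          + algb (p ^ k * (cb x + cb y + p ^ (k + 1) * (ca x * cb y + ca y * cb x))) * πA := by
      rw [hxyc]
      exact mul_repr k _ _ _ _ _ _ (hab x) (hab y)
    have h1 := hcb (x * y) _ _ hxy
    have h2' : Ideal.Quotient.mk (Ideal.span {p})
        (cb x + cb y + p ^ (k + 1) * (ca x * cb y + ca y * cb x))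
        = Ideal.Quotient.mk (Ideal.span {p}) (cb x + cb y) := by
      rw [Ideal.Quotient.mk_eq_mk_iff_sub_mem]
      have e : cb x + cb y + p ^ (k + 1) * (ca x * cb y + ca y * cb x) - (cb x + cb y)
          = p * (p ^ k * (ca x * cb y + ca y * cb x)) := by ring
      rw [e]
      exact Ideal.mul_mem_right _ _ (Ideal.mem_span_singleton.2 dvd_rfl)
    show Multiplicative.ofAdd (Ideal.Quotient.mk (Ideal.span {p}) (cb (x * y))) = _
    rw [h1, h2', map_add, ofAdd_add]
  set φ : ↥N1 →* Multiplicative (R ⧸ Ideal.span {p}) := MonoidHom.mk' f hmul with hφ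
  have hsurj : Function.Surjective φ := by
    intro t
    obtain ⟨t0, ht0⟩ := Ideal.Quotient.mk_surjective (Multiplicative.toAdd t)
    have hcmem : p ^ (2 * k + 1) * t0 ^ 2 ∈ Ideal.span {p} :=
      Ideal.mem_span_singleton.2 ⟨p ^ (2 * k) * t0 ^ 2, by ring⟩
    obtain ⟨d, hd, hdsq⟩ := sqrt_lemma hℓ hnil h2 hcmem
    obtain ⟨e, he⟩ := Ideal.mem_span_singleton.1 hd
    have hnorm : (1 + d) ^ 2 - p * (p ^ k * t0) ^ 2 = 1 := by linear_combination hdsq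
    have hyσ : (algb (1 + d) + algb (p ^ k * t0) * πA)
        * σ (algb (1 + d) + algb (p ^ k * t0) * πA) = 1 := by
      rw [norm_eq σ hσ, hnorm, map_one]
    set x : (Aext R p ℓ)ˣ := Units.mkOfMulEqOne _ _ hyσ with hx
    have hxval : (x : Aext R p ℓ) = algb (1 + d) + algb (p ^ k * t0) * πA := rfl
    have hxmem1 : (x : Aext R p ℓ) * σ (x : Aext R p ℓ) = 1 := by rw [hxval]; exact hyσ
    have hxrep : (x : Aext R p ℓ) - 1
        = algb (p ^ (k + 1) * (p ^ k * t0 ^ 2 * e)) + algb (p ^ k * t0) * πA := by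
      rw [hxval, map_add, map_one]
      have hde : d = p ^ (k + 1) * (p ^ k * t0 ^ 2 * e) := by rw [he]; ring
      rw [← hde]
      ring
    have hxmem2 : (x : Aext R p ℓ) - 1 ∈ Ideal.span {piA R p ℓ} ^ (2 * k + 1) :=
      (mem_odd k _).2 ⟨_, _, hxrep⟩
    refine ⟨⟨x, hxmem1, hxmem2⟩, ?_⟩
    have hval := hcb ⟨x, hxmem1, hxmem2⟩ _ t0 hxrep
    show Multiplicative.ofAdd (Ideal.Quotient.mk (Ideal.span {p}) (cb _)) = t
    rw [hval, ht0]
    simp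
  have hmemker : ∀ x : ↥N1, x ∈ φ.ker ↔
      ((x : (Aext R p ℓ)ˣ) : Aext R p ℓ) - 1 ∈ Ideal.span {piA R p ℓ} ^ (2 * k + 2) := by
    intro x
    rw [MonoidHom.mem_ker]
    constructor
    · intro hx0
      have h0 : Ideal.Quotient.mk (Ideal.span {p}) (cb x) = 0 := by
        have : Multiplicative.toAdd (φ x) = Multiplicative.toAdd (1 : Multiplicative (R ⧸ Ideal.span {p})) := by rw [hx0]
        exact this
      obtain ⟨c, hc⟩ := Ideal.mem_span_singleton.1 (Ideal.Quotient.eq_zero_iff_mem.1 h0)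
      have hrep2 : ((x : (Aext R p ℓ)ˣ) : Aext R p ℓ) - 1
          = algb (p ^ (k + 1) * (ca x)) + algb (p ^ (k + 1) * c) * πA := by
        rw [hab x, hc]
        have e : p ^ k * (p * c) = p ^ (k + 1) * c := by ring
        rw [e]
      have h22 : 2 * k + 2 = 2 * (k + 1) := by ring
      rw [h22]
      exact (mem_even (k + 1) _).2 ⟨ca x, c, hrep2⟩
    · intro hx2
      have h22 : 2 * k + 2 = 2 * (k + 1) := by ring
      rw [h22] at hx2
      obtain ⟨s, t, hst⟩ := (mem_even (k + 1) _).1 hx2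
      have hst' : ((x : (Aext R p ℓ)ˣ) : Aext R p ℓ) - 1
          = algb (p ^ (k + 1) * s) + algb (p ^ k * (p * t)) * πA := by
        rw [hst]
        have e : p ^ k * (p * t) = p ^ (k + 1) * t := by ring
        rw [e]
      have hval := hcb x s (p * t) hst'
      show Multiplicative.ofAdd (Ideal.Quotient.mk (Ideal.span {p}) (cb x)) = 1
      rw [hval]
      have h0 : Ideal.Quotient.mk (Ideal.span {p}) (p * t) = 0 :=
        Ideal.Quotient.eq_zero_iff_mem.2 (Ideal.mul_mem_right _ _
          (Ideal.mem_span_singleton.2 dvd_rfl))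
      rw [h0]
      simp
  have hker : Nat.card ↥φ.ker = Nat.card ↥N2 := by
    refine Nat.card_congr ⟨fun z => ⟨((z : ↥N1) : (Aext R p ℓ)ˣ), (z : ↥N1).2.1,
        (hmemker _).1 z.2⟩,
      fun w => ⟨⟨(w : (Aext R p ℓ)ˣ), w.2.1,
        Ideal.pow_le_pow_right (by omega) w.2.2⟩, (hmemker _).2 w.2.2⟩,
      fun z => rfl, fun w => rfl⟩
  have hcount := Subgroup.card_eq_card_quotient_mul_card_subgroup φ.ker
  have hquot : Nat.card (↥N1 ⧸ φ.ker) = Nat.card (R ⧸ Ideal.span {p}) := by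
    have e := QuotientGroup.quotientKerEquivOfSurjective φ hsurj
    exact Nat.card_congr (e.toEquiv.trans Multiplicative.toAdd)
  rw [hcount, hquot, hker, mul_comm]

end Groups

end Helpers

theorem stmt16
    (hℓ : 1 ≤ ℓ)
    (hmax : IsLocalRing.maximalIdeal R = Ideal.span {p})
    (hnil : Ideal.span {p} ^ ℓ = (⊥ : Ideal R))
    (hnil' : Ideal.span {p} ^ (ℓ - 1) ≠ (⊥ : Ideal R))
    (hq : Nat.card (IsLocalRing.ResidueField R) = q)
    (hodd : Odd q)
    (σ : Aext R p ℓ →ₐ[R] Aext R p ℓ)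
    (hσ : σ (piA R p ℓ) = - piA R p ℓ) :
    ∀ j : ℕ, 1 ≤ j → j ≤ 2 * ℓ - 1 →
      Nat.card {a : (Aext R p ℓ)ˣ //
          (a : Aext R p ℓ) * σ (a : Aext R p ℓ) = 1 ∧
          (a : Aext R p ℓ) - 1 ∈ Ideal.span {piA R p ℓ} ^ j} *
        (if Odd j then q ^ ((j - 1) / 2) else q ^ (j / 2)) =
      Nat.card {a : (Aext R p ℓ)ˣ //
          (a : Aext R p ℓ) * σ (a : Aext R p ℓ) = 1 ∧
          (a : Aext R p ℓ) - 1 ∈ Ideal.span {piA R p ℓ}} := by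
  haveI hnt : Nontrivial R := by
    by_contra h
    rw [not_nontrivial_iff_subsingleton] at h
    exact hnil' (Subsingleton.elim _ _)
  have hp0' : p ^ ℓ = 0 := hp0 hnil
  have h2 : IsUnit (2 : R) := two_unit hq hodd
  have hcard : Nat.card (R ⧸ Ideal.span {p}) = q := by
    rw [← hq]
    exact Nat.card_congr (Ideal.quotEquivOfEq hmax.symm).toEquiv
  have key : ∀ j : ℕ, 1 ≤ j → j ≤ 2 * ℓ - 1 →
      Nat.card ↥(NN σ (Ideal.span {piA R p ℓ} ^ j)) * q ^ (j / 2)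
        = Nat.card ↥(NN σ (Ideal.span {piA R p ℓ} ^ 1)) := by
    intro j hj1
    induction j, hj1 using Nat.le_induction with
    | base => intro _; simp
    | succ n hn ih =>
      intro hn1
      have hih := ih (by omega)
      rcases Nat.even_or_odd n with he | ho
      · obtain ⟨k, hk⟩ := he
        have hk1 : 1 ≤ k := by omega
        have hk2 : k + 1 ≤ ℓ := by omega
        have hA := stepA hℓ hp0' hmax hnil hnil' h2 σ hσ k hk1 hk2
        have hn2k : n = 2 * k := by omega
        rw [hn2k] at hih
        have e1 : n + 1 = 2 * k + 1 := by omega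
        rw [e1, ← hA]
        have ed : (2 * k + 1) / 2 = (2 * k) / 2 := by omega
        rw [ed]
        exact hih
      · obtain ⟨k, hk⟩ := ho
        have hkk : k + 2 ≤ ℓ := by omega
        have hB := stepB hℓ hp0' hmax hnil hnil' h2 σ hσ k hkk
        rw [hcard] at hB
        have e1 : n + 1 = 2 * k + 2 := by omega
        rw [e1]
        rw [hk] at hih
        have ed : (2 * k + 2) / 2 = (2 * k + 1) / 2 + 1 := by omega
        rw [ed, Nat.pow_succ]
        have e2 : Nat.card ↥(NN σ (Ideal.span {piA R p ℓ} ^ (2 * k + 2)))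
              * (q ^ ((2 * k + 1) / 2) * q)
            = (Nat.card ↥(NN σ (Ideal.span {piA R p ℓ} ^ (2 * k + 2))) * q)
              * q ^ ((2 * k + 1) / 2) := by ring
        rw [e2, ← hB]
        exact hih
  intro j hj1 hj2
  have hif : (if Odd j then q ^ ((j - 1) / 2) else q ^ (j / 2)) = q ^ (j / 2) := by
    split_ifs with h
    · obtain ⟨m, rfl⟩ := h
      congr 1
      omega
    · rfl
  rw [hif]
  have hkey := key j hj1 hj2
  rw [pow_one] at hkey
  exact hkey

end
end

section
/- Suppose ℓ > 1. The map (rp, πv) ↦ (-r̄, v̄) from the subgroup (m, rV) of the Heisenberg group H = R × V to the Heisenberg group H̄ = R̄ × V̄ (with R̄ = R/m^{ℓ-1}, V̄ = V/r^{2ℓ-3}V) is a well-defined surjective group homomorphism with kernel (0, nV), where n = m^{ℓ-1}. -/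
open Polynomial

noncomputable section

variable (R : Type) [CommRing R] [IsLocalRing R] [IsPrincipalIdealRing R] [Finite R]
variable (p : R) (ℓ q : ℕ)

/-- Heisenberg multiplication `(r,u)(s,v) = (r + s + f u v, u + v)`. -/
def heisMul {α β : Type} [Add α] [Add β] (g : β → β → α) (x y : α × β) : α × β :=
  (x.1 + y.1 + g x.2 y.2, x.2 + y.2)

namespace Stmt17Aux

/-- membership in `span {a} • ⊤` -/
lemma mem_singleton_smul {A M : Type*} [CommRing A] [AddCommGroup M] [Module A M]
    (a : A) (x : M) :
    x ∈ (Ideal.span {a} • (⊤ : Submodule A M) : Submodule A M) ↔ ∃ v, x = a • v := by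
  constructor
  · intro hx
    refine Submodule.smul_induction_on hx ?_ ?_
    · intro r hr n _
      obtain ⟨c, hc⟩ := Ideal.mem_span_singleton'.mp hr
      exact ⟨c • n, by rw [← hc, mul_comm, mul_smul]⟩
    · rintro x y ⟨v1, rfl⟩ ⟨v2, rfl⟩
      exact ⟨v1 + v2, (smul_add a v1 v2).symm⟩
  · rintro ⟨v, rfl⟩
    exact Submodule.smul_mem_smul (Ideal.mem_span_singleton_self a) Submodule.mem_top

section Aux

variable {R : Type} [CommRing R] {p : R} {ℓ : ℕ}

/-- annihilator of `p` in the finite chain ring `R` -/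
lemma ann_p [IsLocalRing R]
    (hmax : IsLocalRing.maximalIdeal R = Ideal.span {p})
    (hnil' : Ideal.span {p} ^ (ℓ - 1) ≠ (⊥ : Ideal R))
    {r : R} (hr : r * p = 0) : r ∈ Ideal.span {p ^ (ℓ - 1)} := by
  have hplpow : p ^ (ℓ - 1) ≠ 0 := by
    intro h0
    apply hnil'
    rw [Ideal.span_singleton_pow, h0, Ideal.span_singleton_eq_bot.mpr rfl]
  have key : ∀ j : ℕ, j ≤ ℓ - 1 → r ∈ Ideal.span {p ^ j} := by
    intro j
    induction j with
    | zero => intro _; simp [Ideal.span_singleton_one]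
    | succ j ih =>
      intro hj
      obtain ⟨c, hc⟩ := Ideal.mem_span_singleton'.mp (ih (Nat.le_of_succ_le hj))
      by_cases hu : IsUnit c
      · exfalso
        obtain ⟨u, hu⟩ := hu
        have h1 : p ^ (j + 1) = 0 := by
          have : (u : R) * p ^ (j + 1) = 0 := by
            rw [pow_succ, ← mul_assoc, hu, hc, hr]
          calc p ^ (j + 1) = (↑u⁻¹ * u) * p ^ (j + 1) := by simp
            _ = ↑u⁻¹ * ((u : R) * p ^ (j + 1)) := by ring
            _ = 0 := by rw [this, mul_zero]
        apply hplpow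
        have : ℓ - 1 = (j + 1) + (ℓ - 1 - (j + 1)) := by omega
        rw [this, pow_add, h1, zero_mul]
      · have hcm : c ∈ Ideal.span {p} := by
          rw [← hmax]; exact hu
        obtain ⟨c', hc'⟩ := Ideal.mem_span_singleton'.mp hcm
        exact Ideal.mem_span_singleton'.mpr ⟨c', by rw [← hc, ← hc']; ring⟩
  exact key (ℓ - 1) le_rfl

lemma key_poly (hℓ : 1 ≤ ℓ) (hpl : p ^ ℓ = 0) {c d : R}
    (h : C c + C d * X ∈ Ideal.span ({X ^ 2 - C p, X ^ (2 * ℓ - 1)} : Set (Polynomial R))) :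
    c = 0 ∧ d ∈ Ideal.span {p ^ (ℓ - 1)} := by
  rcases subsingleton_or_nontrivial R with hnt | hnt
  · exact ⟨Subsingleton.elim _ _, by rw [Subsingleton.elim d 0]; exact Ideal.zero_mem _⟩
  obtain ⟨k, rfl⟩ : ∃ k, ℓ = k + 1 := ⟨ℓ - 1, by omega⟩
  have hexp : 2 * (k + 1) - 1 = 2 * k + 1 := by omega
  rw [hexp] at h
  simp only [Nat.add_sub_cancel]
  obtain ⟨a, b, hab⟩ := Ideal.mem_span_pair.mp h
  set f₀ : R[X] := X ^ 2 - C p with hf₀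
  have hmon : f₀.Monic := monic_X_pow_sub_C p (by norm_num)
  have hdegf₀ : f₀.degree = 2 := degree_X_pow_sub_C (by norm_num) p
  have hqdeg1 : (b %ₘ f₀).degree ≤ 1 := by
    have hqdeg : (b %ₘ f₀).degree < 2 := hdegf₀ ▸ degree_modByMonic_lt b hmon
    generalize (b %ₘ f₀).degree = a at hqdeg ⊢
    induction a using WithBot.recBotCoe with
    | bot => exact bot_le
    | coe n =>
      rw [show (2 : WithBot ℕ) = ((2 : ℕ) : WithBot ℕ) from rfl] at hqdeg
      rw [show (1 : WithBot ℕ) = ((1 : ℕ) : WithBot ℕ) from rfl]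
      exact WithBot.coe_le_coe.mpr (Nat.lt_succ_iff.mp (WithBot.coe_lt_coe.mp hqdeg))
  set e := (b %ₘ f₀).coeff 0 with he
  set f1 := (b %ₘ f₀).coeff 1 with hf1
  have hq_eq : b %ₘ f₀ = C f1 * X + C e := eq_X_add_C_of_degree_le_one hqdeg1
  have hqb : b %ₘ f₀ + f₀ * (b /ₘ f₀) = b := modByMonic_add_div b f₀
  rw [← hqb, hq_eq] at hab
  obtain ⟨u1, hu1⟩ := sub_dvd_pow_sub_pow (X ^ 2) (C p) (k + 1)
  obtain ⟨u2, hu2⟩ := sub_dvd_pow_sub_pow (X ^ 2) (C p) k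
  have hCpk1 : (C p : R[X]) ^ (k + 1) = 0 := by
    rw [← C_pow, hpl, C_0]
  have hdvd : f₀ ∣ C c + C d * X - C (e * p ^ k) * X := by
    refine ⟨a + (b /ₘ f₀) * X ^ (2 * k + 1) + C f1 * u1 + C e * X * u2, ?_⟩
    rw [map_mul, map_pow]
    linear_combination (-1 : R[X]) * hab + C f1 * hu1 + C e * X * hu2 + C f1 * hCpk1
  have hrw : C c + C d * X - C (e * p ^ k) * X = C (d - e * p ^ k) * X + C c := by
    rw [map_sub]; ring
  rw [hrw] at hdvd
  have h0 : C (d - e * p ^ k) * X + C c = 0 := by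
    by_contra h0
    exact hmon.not_dvd_of_degree_lt h0 (lt_of_le_of_lt (degree_linear_le)
      (by rw [hdegf₀]; norm_num)) hdvd
  have hc0 : c = 0 := by
    have := congrArg (fun q => Polynomial.coeff q 0) h0
    simpa using this
  have hd : d - e * p ^ k = 0 := by
    have h1 := congrArg (fun q => Polynomial.coeff q 1) h0
    simp only [coeff_add, coeff_C_mul, coeff_X_one, coeff_C, mul_one] at h1
    simpa using h1
  exact ⟨hc0, Ideal.mem_span_singleton'.mpr ⟨e, (sub_eq_zero.mp hd).symm⟩⟩

lemma algebraMap_mk (p : R) (ℓ : ℕ) (c : R) : algebraMap R (Aext R p ℓ) c =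
    Ideal.Quotient.mk (Ideal.span ({X ^ 2 - C p, X ^ (2 * ℓ - 1)} : Set (Polynomial R))) (C c) := by
  rw [IsScalarTower.algebraMap_apply R (Polynomial R) (Aext R p ℓ),
    Ideal.Quotient.algebraMap_eq, Polynomial.algebraMap_eq]

lemma pisq (p : R) (ℓ : ℕ) : piA R p ℓ ^ 2 = algebraMap R (Aext R p ℓ) p := by
  rw [algebraMap_mk, piA, ← map_pow]
  rw [Ideal.Quotient.mk_eq_mk_iff_sub_mem]
  exact Ideal.subset_span (Set.mem_insert _ _)

lemma zero_rep (hℓ : 1 ≤ ℓ) (hpl : p ^ ℓ = 0) {c d : R}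
    (h : algebraMap R (Aext R p ℓ) c + algebraMap R (Aext R p ℓ) d * piA R p ℓ = 0) :
    c = 0 ∧ d ∈ Ideal.span {p ^ (ℓ - 1)} := by
  rw [algebraMap_mk, algebraMap_mk, piA, ← map_mul, ← map_add,
    Ideal.Quotient.eq_zero_iff_mem] at h
  exact key_poly hℓ hpl h

lemma algebraMap_inj (hℓ : 1 ≤ ℓ) (hpl : p ^ ℓ = 0) {x : R}
    (h : algebraMap R (Aext R p ℓ) x = 0) : x = 0 := by
  refine (zero_rep hℓ hpl (c := x) (d := 0) ?_).1
  rw [map_zero, zero_mul, add_zero]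
  exact h

lemma a_rep (p : R) (ℓ : ℕ) (a : Aext R p ℓ) :
    ∃ c d : R, a = algebraMap R (Aext R p ℓ) c + algebraMap R (Aext R p ℓ) d * piA R p ℓ := by
  obtain ⟨q, rfl⟩ := Ideal.Quotient.mk_surjective a
  have hmon : (X ^ 2 - C p : R[X]).Monic := monic_X_pow_sub_C p (by norm_num)
  refine ⟨(q %ₘ (X ^ 2 - C p)).coeff 0, (q %ₘ (X ^ 2 - C p)).coeff 1, ?_⟩
  rw [algebraMap_mk, algebraMap_mk, piA, ← map_mul, ← map_add,
    Ideal.Quotient.mk_eq_mk_iff_sub_mem]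
  have hqb : q %ₘ (X ^ 2 - C p) + (X ^ 2 - C p) * (q /ₘ (X ^ 2 - C p)) = q :=
    modByMonic_add_div q (X ^ 2 - C p)
  have hqdeg1 : (q %ₘ (X ^ 2 - C p)).degree ≤ 1 := by
    have hqdeg : (q %ₘ (X ^ 2 - C p)).degree < 2 := by
      rcases subsingleton_or_nontrivial R with hnt | hnt
      · rw [Subsingleton.elim (q %ₘ (X ^ 2 - C p)) 0, degree_zero]
        exact bot_lt_iff_ne_bot.mpr (by simp)
      · have h2 : (X ^ 2 - C p : R[X]).degree = 2 := degree_X_pow_sub_C (by norm_num) p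
        exact h2 ▸ degree_modByMonic_lt q hmon
    generalize (q %ₘ (X ^ 2 - C p)).degree = a at hqdeg ⊢
    induction a using WithBot.recBotCoe with
    | bot => exact bot_le
    | coe n =>
      rw [show (2 : WithBot ℕ) = ((2 : ℕ) : WithBot ℕ) from rfl] at hqdeg
      rw [show (1 : WithBot ℕ) = ((1 : ℕ) : WithBot ℕ) from rfl]
      exact WithBot.coe_le_coe.mpr (Nat.lt_succ_iff.mp (WithBot.coe_lt_coe.mp hqdeg))
  have hq_eq := eq_X_add_C_of_degree_le_one hqdeg1
  have hkey : q - (C ((q %ₘ (X ^ 2 - C p)).coeff 0) + C ((q %ₘ (X ^ 2 - C p)).coeff 1) * X)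
      = (X ^ 2 - C p) * (q /ₘ (X ^ 2 - C p)) := by
    nth_rewrite 1 [← hqb]
    nth_rewrite 1 [hq_eq]
    ring
  rw [hkey]
  exact Ideal.mul_mem_right _ _ (Ideal.subset_span (Set.mem_insert _ _))

lemma pipow (hℓ : 1 ≤ ℓ) :
    piA R p ℓ ^ (2 * ℓ - 2) = algebraMap R (Aext R p ℓ) (p ^ (ℓ - 1)) := by
  have h : 2 * ℓ - 2 = 2 * (ℓ - 1) := by omega
  rw [h, pow_mul, pisq, ← map_pow]

lemma ann_pi [IsLocalRing R] (hℓ : 1 ≤ ℓ)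
    (hmax : IsLocalRing.maximalIdeal R = Ideal.span {p})
    (hpl : p ^ ℓ = 0)
    (hnil' : Ideal.span {p} ^ (ℓ - 1) ≠ (⊥ : Ideal R))
    {a : Aext R p ℓ} (h : a * piA R p ℓ = 0) :
    ∃ b, a = piA R p ℓ ^ (2 * ℓ - 2) * b := by
  obtain ⟨c, d, rfl⟩ := a_rep p ℓ a
  have hcomp : (algebraMap R (Aext R p ℓ) c + algebraMap R (Aext R p ℓ) d * piA R p ℓ)
      * piA R p ℓ = algebraMap R (Aext R p ℓ) (d * p)
        + algebraMap R (Aext R p ℓ) c * piA R p ℓ := by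
    have h2 := pisq p ℓ
    calc (algebraMap R (Aext R p ℓ) c + algebraMap R (Aext R p ℓ) d * piA R p ℓ) * piA R p ℓ
        = algebraMap R (Aext R p ℓ) d * piA R p ℓ ^ 2
          + algebraMap R (Aext R p ℓ) c * piA R p ℓ := by ring
      _ = _ := by rw [h2, ← map_mul]
  rw [hcomp] at h
  obtain ⟨hdp, hcmem⟩ := zero_rep hℓ hpl h
  have hdmem : d ∈ Ideal.span {p ^ (ℓ - 1)} := ann_p hmax hnil' hdp
  obtain ⟨c0, hc0⟩ := Ideal.mem_span_singleton'.mp hcmem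
  obtain ⟨d0, hd0⟩ := Ideal.mem_span_singleton'.mp hdmem
  refine ⟨algebraMap R (Aext R p ℓ) c0 + algebraMap R (Aext R p ℓ) d0 * piA R p ℓ, ?_⟩
  rw [pipow hℓ, ← hc0, ← hd0, map_mul, map_mul]
  ring

lemma ann_pi_V {V : Type} [AddCommGroup V] [Module (Aext R p ℓ) V] {ι : Type} [Fintype ι]
    (b : Module.Basis ι (Aext R p ℓ) V)
    (hann : ∀ a : Aext R p ℓ, a * piA R p ℓ = 0 → ∃ b, a = piA R p ℓ ^ (2 * ℓ - 2) * b)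
    {v : V} (h : piA R p ℓ • v = 0) : ∃ w, v = piA R p ℓ ^ (2 * ℓ - 2) • w := by
  classical
  have hr : ∀ i, b.repr v i * piA R p ℓ = 0 := by
    intro i
    have h1 : b.repr (piA R p ℓ • v) = piA R p ℓ • b.repr v := map_smul _ _ _
    rw [h, map_zero] at h1
    have h2 := congrFun (congrArg DFunLike.coe h1.symm) i
    simpa [mul_comm] using h2
  choose g hg using fun i => hann _ (hr i)
  refine ⟨∑ i, g i • b i, ?_⟩
  calc v = ∑ i, b.repr v i • b i := (b.sum_repr v).symm
    _ = piA R p ℓ ^ (2 * ℓ - 2) • ∑ i, g i • b i := by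
        rw [Finset.smul_sum]
        refine Finset.sum_congr rfl fun i _ => ?_
        rw [smul_smul, ← hg i]

end Aux

lemma two_unit {R : Type} [CommRing R] [IsLocalRing R] [Finite R] {q : ℕ}
    (hq : Nat.card (IsLocalRing.ResidueField R) = q) (hodd : Odd q) : IsUnit (2 : R) := by
  by_contra h2
  have h2m : (2 : R) ∈ IsLocalRing.maximalIdeal R := h2
  set k := IsLocalRing.ResidueField R
  have hfin : Finite k := Finite.of_surjective _ Ideal.Quotient.mk_surjective
  have hft : Fintype k := Fintype.ofFinite k
  have h2k : (2 : k) = 0 := by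
    have : IsLocalRing.residue R 2 = 0 := Ideal.Quotient.eq_zero_iff_mem.mpr h2m
    rwa [map_ofNat] at this
  have hqk : ((q : ℕ) : k) = 0 := by
    rw [← hq, Nat.card_eq_fintype_card]
    exact FiniteField.cast_card_eq_zero k
  obtain ⟨m, hm⟩ := hodd
  have h1 : (1 : k) = 0 := by
    rw [hm] at hqk
    push_cast at hqk
    rw [Nat.cast_mul, Nat.cast_ofNat, h2k] at hqk
    simpa using hqk
  exact one_ne_zero h1

end Stmt17Aux

theorem stmt17
    (hℓ : 1 ≤ ℓ)
    (hmax : IsLocalRing.maximalIdeal R = Ideal.span {p})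
    (hnil : Ideal.span {p} ^ ℓ = (⊥ : Ideal R))
    (hnil' : Ideal.span {p} ^ (ℓ - 1) ≠ (⊥ : Ideal R))
    (hq : Nat.card (IsLocalRing.ResidueField R) = q)
    (hodd : Odd q)
    (σ : Aext R p ℓ →ₐ[R] Aext R p ℓ)
    (hσ : σ (piA R p ℓ) = - piA R p ℓ)
    (V : Type) [AddCommGroup V] [Module (Aext R p ℓ) V] [Module R V]
    [IsScalarTower R (Aext R p ℓ) V]
    (n : ℕ) (hn : 1 ≤ n)
    (b : Module.Basis (Fin n ⊕ Fin n) (Aext R p ℓ) V)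
    (h : V → V → Aext R p ℓ)
    (hadd : ∀ v v' w : V, h (v + v') w = h v w + h v' w)
    (hs1 : ∀ (a : Aext R p ℓ) (v w : V), h (a • v) w = σ a * h v w)
    (hs2 : ∀ (a : Aext R p ℓ) (v w : V), h v (a • w) = a * h v w)
    (hsk : ∀ v w : V, h w v = - σ (h v w))
    (hb1 : ∀ i j, h (b (Sum.inl i)) (b (Sum.inr j)) = if i = j then 1 else 0)
    (hb2 : ∀ i j, h (b (Sum.inl i)) (b (Sum.inl j)) = 0)
    (hb3 : ∀ i j, h (b (Sum.inr i)) (b (Sum.inr j)) = 0)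
    (f : V → V → R)
    (hf : ∀ v w : V, algebraMap R (Aext R p ℓ) (2 * f v w) = h v w + σ (h v w))
    (hℓ1 : 1 < ℓ)
    (fbar : (V ⧸ (Ideal.span {piA R p ℓ} ^ (2 * ℓ - 3) • (⊤ : Submodule (Aext R p ℓ) V) :
          Submodule (Aext R p ℓ) V)) →
        (V ⧸ (Ideal.span {piA R p ℓ} ^ (2 * ℓ - 3) • (⊤ : Submodule (Aext R p ℓ) V) :
          Submodule (Aext R p ℓ) V)) →
        R ⧸ Ideal.span {p} ^ (ℓ - 1))
    (hfbar : ∀ v w : V,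
      fbar (Submodule.Quotient.mk v) (Submodule.Quotient.mk w) =
        Ideal.Quotient.mk (Ideal.span {p} ^ (ℓ - 1)) (f v w)) :
    ∃ Φ : R × V →
        (R ⧸ Ideal.span {p} ^ (ℓ - 1)) ×
        (V ⧸ (Ideal.span {piA R p ℓ} ^ (2 * ℓ - 3) • (⊤ : Submodule (Aext R p ℓ) V) :
          Submodule (Aext R p ℓ) V)),
      (∀ (r : R) (v : V),
        Φ (r * p, piA R p ℓ • v) =
          (Ideal.Quotient.mk (Ideal.span {p} ^ (ℓ - 1)) (-r), Submodule.Quotient.mk v)) ∧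
      (∀ x y : R × V,
        x.1 ∈ Ideal.span {p} →
        x.2 ∈ (Ideal.span {piA R p ℓ} • (⊤ : Submodule (Aext R p ℓ) V) :
          Submodule (Aext R p ℓ) V) →
        y.1 ∈ Ideal.span {p} →
        y.2 ∈ (Ideal.span {piA R p ℓ} • (⊤ : Submodule (Aext R p ℓ) V) :
          Submodule (Aext R p ℓ) V) →
        Φ (heisMul f x y) = heisMul fbar (Φ x) (Φ y)) ∧
      (∀ z, ∃ x : R × V,
        x.1 ∈ Ideal.span {p} ∧
        x.2 ∈ (Ideal.span {piA R p ℓ} • (⊤ : Submodule (Aext R p ℓ) V) :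
          Submodule (Aext R p ℓ) V) ∧ Φ x = z) ∧
      (∀ x : R × V,
        x.1 ∈ Ideal.span {p} →
        x.2 ∈ (Ideal.span {piA R p ℓ} • (⊤ : Submodule (Aext R p ℓ) V) :
          Submodule (Aext R p ℓ) V) →
        (Φ x = (0, 0) ↔ x.1 = 0 ∧
          x.2 ∈ (Ideal.span {piA R p ℓ ^ (2 * ℓ - 2)} • (⊤ : Submodule (Aext R p ℓ) V) :
            Submodule (Aext R p ℓ) V))) := by
  classical
  -- basic facts
  have hpl : p ^ ℓ = 0 := by
    have hmem : p ^ ℓ ∈ Ideal.span {p} ^ ℓ := by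
      rw [Ideal.span_singleton_pow]
      exact Ideal.mem_span_singleton_self _
    rw [hnil] at hmem
    simpa using hmem
  have hannA : ∀ a : Aext R p ℓ, a * piA R p ℓ = 0 →
      ∃ c, a = piA R p ℓ ^ (2 * ℓ - 2) * c :=
    fun a ha => Stmt17Aux.ann_pi hℓ hmax hpl hnil' ha
  have hannV : ∀ v : V, piA R p ℓ • v = 0 → ∃ w, v = piA R p ℓ ^ (2 * ℓ - 2) • w :=
    fun v hv => Stmt17Aux.ann_pi_V b hannA hv
  have hpow23 : piA R p ℓ * piA R p ℓ ^ (2 * ℓ - 3) = piA R p ℓ ^ (2 * ℓ - 2) := by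
    rw [← pow_succ']
    congr 1
    omega
  have h2u : IsUnit (2 : R) := Stmt17Aux.two_unit hq hodd
  have hfpi : ∀ v w : V, f (piA R p ℓ • v) (piA R p ℓ • w) = -(p * f v w) := by
    intro v w
    have hh : h (piA R p ℓ • v) (piA R p ℓ • w)
        = -(algebraMap R (Aext R p ℓ) p * h v w) := by
      calc h (piA R p ℓ • v) (piA R p ℓ • w)
          = σ (piA R p ℓ) * (piA R p ℓ * h v w) := by rw [hs1, hs2]
        _ = -(piA R p ℓ ^ 2 * h v w) := by rw [hσ]; ring
        _ = -(algebraMap R (Aext R p ℓ) p * h v w) := by rw [Stmt17Aux.pisq]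
    have h2 : algebraMap R (Aext R p ℓ) (2 * f (piA R p ℓ • v) (piA R p ℓ • w))
        = algebraMap R (Aext R p ℓ) (-(p * (2 * f v w))) := by
      rw [hf, hh, map_neg, map_mul, AlgHom.commutes, map_neg, map_mul, hf]
      ring
    have h3 : 2 * f (piA R p ℓ • v) (piA R p ℓ • w) = -(p * (2 * f v w)) := by
      have h4 := Stmt17Aux.algebraMap_inj hℓ hpl
        (x := 2 * f (piA R p ℓ • v) (piA R p ℓ • w) - (-(p * (2 * f v w))))
        (by rw [map_sub, h2, sub_self])
      exact sub_eq_zero.mp h4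
    have h5 : 2 * f (piA R p ℓ • v) (piA R p ℓ • w) = 2 * (-(p * f v w)) := by
      rw [h3]; ring
    exact h2u.mul_left_cancel h5
  -- the map
  set Φ : R × V →
      (R ⧸ Ideal.span {p} ^ (ℓ - 1)) ×
      (V ⧸ (Ideal.span {piA R p ℓ} ^ (2 * ℓ - 3) • (⊤ : Submodule (Aext R p ℓ) V) :
        Submodule (Aext R p ℓ) V)) :=
    fun x => if hx : (∃ r : R, x.1 = r * p) ∧ (∃ v : V, x.2 = piA R p ℓ • v) then
      (Ideal.Quotient.mk (Ideal.span {p} ^ (ℓ - 1)) (-(hx.1.choose)),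
        Submodule.Quotient.mk hx.2.choose)
    else (0, 0) with hΦdef
  have key : ∀ (r : R) (v : V),
      Φ (r * p, piA R p ℓ • v) =
        (Ideal.Quotient.mk (Ideal.span {p} ^ (ℓ - 1)) (-r), Submodule.Quotient.mk v) := by
    intro r v
    have hx : (∃ r' : R, (r * p, piA R p ℓ • v).1 = r' * p) ∧
        (∃ v' : V, (r * p, piA R p ℓ • v).2 = piA R p ℓ • v') := ⟨⟨r, rfl⟩, ⟨v, rfl⟩⟩
    rw [hΦdef]
    simp only [dif_pos hx, Prod.mk.injEq]
    constructor
    · -- first component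
      rw [Ideal.Quotient.mk_eq_mk_iff_sub_mem]
      have hspec : r * p = hx.1.choose * p := hx.1.choose_spec
      have hz : (r - hx.1.choose) * p = 0 := by
        linear_combination hspec
      have := Stmt17Aux.ann_p hmax hnil' hz
      rw [Ideal.span_singleton_pow]
      have heq : -hx.1.choose - -r = r - hx.1.choose := by ring
      rw [heq]
      exact this
    · -- second component
      rw [Submodule.Quotient.eq]
      have hspec : piA R p ℓ • v = piA R p ℓ • hx.2.choose := hx.2.choose_spec
      have hz : piA R p ℓ • (hx.2.choose - v) = 0 := by
        rw [smul_sub, ← hspec, sub_self]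
      obtain ⟨w, hw⟩ := hannV _ hz
      rw [Ideal.span_singleton_pow]
      refine (Stmt17Aux.mem_singleton_smul _ _).mpr ⟨piA R p ℓ • w, ?_⟩
      rw [hw, smul_smul, mul_comm (piA R p ℓ ^ (2 * ℓ - 3)), hpow23]
  refine ⟨Φ, key, ?_, ?_, ?_⟩
  · -- homomorphism
    intro x y hx1 hx2 hy1 hy2
    obtain ⟨x1, x2⟩ := x
    obtain ⟨y1, y2⟩ := y
    obtain ⟨r, hr⟩ := Ideal.mem_span_singleton'.mp hx1
    obtain ⟨v, hv⟩ := (Stmt17Aux.mem_singleton_smul _ _).mp hx2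
    obtain ⟨s, hs⟩ := Ideal.mem_span_singleton'.mp hy1
    obtain ⟨w, hw⟩ := (Stmt17Aux.mem_singleton_smul _ _).mp hy2
    dsimp only at hr hv hs hw
    subst hr hv hs hw
    have hmul : heisMul f (r * p, piA R p ℓ • v) (s * p, piA R p ℓ • w)
        = ((r + s - f v w) * p, piA R p ℓ • (v + w)) := by
      simp only [heisMul, hfpi v w, smul_add, Prod.mk.injEq]
      exact ⟨by ring, trivial⟩
    rw [hmul, key, key, key]
    simp only [heisMul, hfbar, Prod.mk.injEq]
    constructor
    · rw [← map_add, ← map_add]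
      congr 1
      ring
    · exact Submodule.Quotient.mk_add _
  · -- surjectivity
    intro z
    obtain ⟨s, hs⟩ := Ideal.Quotient.mk_surjective z.1
    obtain ⟨v, hv⟩ := Submodule.Quotient.mk_surjective _ z.2
    refine ⟨((-s) * p, piA R p ℓ • v), Ideal.mem_span_singleton'.mpr ⟨-s, rfl⟩,
      (Stmt17Aux.mem_singleton_smul _ _).mpr ⟨v, rfl⟩, ?_⟩
    rw [key, neg_neg, hs, hv]
  · -- kernel
    intro x hx1 hx2
    obtain ⟨x1, x2⟩ := x
    obtain ⟨r, hr⟩ := Ideal.mem_span_singleton'.mp hx1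
    obtain ⟨v, hv⟩ := (Stmt17Aux.mem_singleton_smul _ _).mp hx2
    dsimp only at hr hv
    subst hr hv
    rw [key]
    constructor
    · intro h0
      rw [Prod.mk.injEq] at h0
      obtain ⟨h01, h02⟩ := h0
      constructor
      · -- first component is zero
        have hm : -r ∈ Ideal.span {p} ^ (ℓ - 1) := Ideal.Quotient.eq_zero_iff_mem.mp h01
        rw [Ideal.span_singleton_pow] at hm
        obtain ⟨c, hc⟩ := Ideal.mem_span_singleton'.mp hm
        have hexpl : (ℓ - 1) + 1 = ℓ := by omega
        have hpow : p ^ (ℓ - 1) * p = 0 := by rw [← pow_succ, hexpl, hpl]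
        show r * p = 0
        linear_combination p * hc - c * hpow
      · -- second component
        have hm : v ∈ (Ideal.span {piA R p ℓ} ^ (2 * ℓ - 3) •
            (⊤ : Submodule (Aext R p ℓ) V) : Submodule (Aext R p ℓ) V) :=
          (Submodule.Quotient.mk_eq_zero _).mp h02
        rw [Ideal.span_singleton_pow] at hm
        obtain ⟨u, hu⟩ := (Stmt17Aux.mem_singleton_smul _ _).mp hm
        refine (Stmt17Aux.mem_singleton_smul _ _).mpr ⟨u, ?_⟩
        show piA R p ℓ • v = _
        rw [hu, smul_smul, hpow23]
    · rintro ⟨h1, h2⟩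
      rw [Prod.mk.injEq]
      constructor
      · rw [Ideal.Quotient.eq_zero_iff_mem, Ideal.span_singleton_pow]
        exact neg_mem (Stmt17Aux.ann_p hmax hnil' h1)
      · obtain ⟨u, hu⟩ := (Stmt17Aux.mem_singleton_smul _ _).mp h2
        have hz : piA R p ℓ • (v - piA R p ℓ ^ (2 * ℓ - 3) • u) = 0 := by
          rw [smul_sub, smul_smul, hpow23, ← hu]
          exact sub_self _
        obtain ⟨w, hw⟩ := hannV _ hz
        rw [Submodule.Quotient.mk_eq_zero, Ideal.span_singleton_pow]
        refine (Stmt17Aux.mem_singleton_smul _ _).mpr ⟨u + piA R p ℓ • w, ?_⟩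
        have hveq : v = piA R p ℓ ^ (2 * ℓ - 3) • u + piA R p ℓ ^ (2 * ℓ - 2) • w := by
          rw [← hw]; abel
        rw [hveq, smul_add, smul_smul, mul_comm (piA R p ℓ ^ (2 * ℓ - 3)), hpow23]
end
end

section
/- Suppose n > 1. If u, v ∈ V∖rV satisfy h(u,u) = h(v,v), then u and v lie in the same orbit of the special unitary group SU(V,h). -/
open Polynomial Matrix

noncomputable section

namespace SympAux

open Matrix

open Matrix

variable {F : Type} [Field F] {n : ℕ}

local notation "ι" => (Fin n ⊕ Fin n)

/-- standard basis vector -/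
def ev (j : ι) : ι → F := Pi.single j 1

/-- the symplectic form -/
def Bf (x y : ι → F) : F := x ⬝ᵥ (J (Fin n) F *ᵥ y)

def idx : ι → ℕ := Sum.elim Fin.val Fin.val

lemma J_mulVec (x : ι → F) :
    J (Fin n) F *ᵥ x = Sum.elim (-(x ∘ Sum.inr)) (x ∘ Sum.inl) := by
  have hx : x = Sum.elim (x ∘ Sum.inl) (x ∘ Sum.inr) := (Sum.elim_comp_inl_inr x).symm
  rw [Matrix.J]
  nth_rewrite 1 [hx]
  rw [fromBlocks_mulVec]
  simp [Matrix.neg_mulVec]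

lemma Bf_eq (x y : ι → F) :
    Bf x y = (x ∘ Sum.inr) ⬝ᵥ (y ∘ Sum.inl) - (x ∘ Sum.inl) ⬝ᵥ (y ∘ Sum.inr) := by
  have hx : x = Sum.elim (x ∘ Sum.inl) (x ∘ Sum.inr) := (Sum.elim_comp_inl_inr x).symm
  rw [Bf, J_mulVec]
  nth_rewrite 1 [hx]
  rw [sumElim_dotProduct_sumElim]
  rw [dotProduct_neg]
  ring

lemma Bf_self (x : ι → F) : Bf x x = 0 := by
  rw [Bf_eq, dotProduct_comm, sub_self]

lemma Bf_neg_swap (x y : ι → F) : Bf x y = - Bf y x := by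
  rw [Bf_eq, Bf_eq, neg_sub]
  rw [dotProduct_comm]
  congr 1
  exact dotProduct_comm _ _

lemma Bf_single (j : ι) (y : ι → F) : Bf (ev j) y = (J (Fin n) F *ᵥ y) j := by
  rw [Bf, ev, single_dotProduct, one_mul]

lemma Bf_single_inl (a : Fin n) (y : ι → F) : Bf (ev (Sum.inl a)) y = - y (Sum.inr a) := by
  rw [Bf_single, J_mulVec]; rfl

lemma Bf_single_inr (a : Fin n) (y : ι → F) : Bf (ev (Sum.inr a)) y = y (Sum.inl a) := by
  rw [Bf_single, J_mulVec]; rfl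

lemma hef (a : Fin n) : Bf (ev (Sum.inl a)) (ev (Sum.inr a) : ι → F) = -1 := by
  rw [Bf_single_inl, ev, Pi.single_eq_same]

lemma Bf_add_right (x y z : ι → F) : Bf x (y + z) = Bf x y + Bf x z := by
  rw [Bf, Bf, Bf, mulVec_add, dotProduct_add]

lemma Bf_sub_right (x y z : ι → F) : Bf x (y - z) = Bf x y - Bf x z := by
  rw [Bf, Bf, Bf, sub_eq_add_neg, mulVec_add, dotProduct_add, Matrix.mulVec_neg,
    dotProduct_neg, sub_eq_add_neg]

lemma Bf_add_left (x y z : ι → F) : Bf (x + y) z = Bf x z + Bf y z := by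
  rw [Bf, Bf, Bf, add_dotProduct]

lemma Bf_zero_left (y : ι → F) : Bf 0 y = 0 := by
  rw [Bf, zero_dotProduct]

/-- predicate: y is in the perp of the first k hyperbolic pairs -/
def Wp (k : ℕ) (y : ι → F) : Prop := ∀ j : ι, idx j < k → Bf (ev j) y = 0

lemma Wp_iff (k : ℕ) (y : ι → F) : Wp k y ↔ ∀ i : ι, idx i < k → y i = 0 := by
  constructor
  · intro hy i hi
    cases i with
    | inl a => have := hy (Sum.inr a) hi; rwa [Bf_single_inr] at this
    | inr a =>
      have := hy (Sum.inl a) hi; rw [Bf_single_inl] at this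
      exact neg_eq_zero.mp this
  · intro hy j hj
    cases j with
    | inl a => rw [Bf_single_inl, hy (Sum.inr a) hj, neg_zero]
    | inr a => rw [Bf_single_inr]; exact hy (Sum.inl a) hj

lemma Wp_sub (k : ℕ) {x y : ι → F} (hx : Wp k x) (hy : Wp k y) : Wp k (x - y) := by
  intro j hj; rw [Bf_sub_right, hx j hj, hy j hj, sub_zero]

lemma Wp_add (k : ℕ) {x y : ι → F} (hx : Wp k x) (hy : Wp k y) : Wp k (x + y) := by
  intro j hj; rw [Bf_add_right, hx j hj, hy j hj, add_zero]

lemma Wp_ev (k : ℕ) (j : ι) (hj : ¬ idx j < k) : Wp k (ev j : ι → F) := by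
  rw [Wp_iff]
  intro i hi
  have hij : i ≠ j := fun hij => hj (hij ▸ hi)
  exact Pi.single_eq_of_ne hij 1

lemma ev_ne_zero (j : ι) : (ev j : ι → F) ≠ 0 := by
  intro h
  have := congrFun h j
  rw [ev, Pi.single_eq_same] at this
  exact one_ne_zero this

/-- symplectic transvection -/
def tv (x : ι → F) (c : F) : Matrix ι ι F := 1 + vecMulVec x (c • (J (Fin n) F *ᵥ x))

lemma vecMulVec_mulVec (x w y : ι → F) : vecMulVec x w *ᵥ y = (w ⬝ᵥ y) • x := by
  ext i
  simp only [vecMulVec, mulVec, dotProduct, Pi.smul_apply, smul_eq_mul, of_apply]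
  rw [Finset.sum_mul]
  exact Finset.sum_congr rfl fun j _ => by ring

lemma vecMulVec_transpose' (x w : ι → F) : (vecMulVec x w)ᵀ = vecMulVec w x := by
  ext i j; simp [vecMulVec, mul_comm]

lemma mul_vecMulVec (A : Matrix ι ι F) (x w : ι → F) :
    A * vecMulVec x w = vecMulVec (A *ᵥ x) w := by
  ext i j
  simp only [vecMulVec, mul_apply, of_apply, mulVec, dotProduct]
  rw [Finset.sum_mul]
  exact Finset.sum_congr rfl fun k _ => by ring

lemma vecMulVec_mul (A : Matrix ι ι F) (x w : ι → F) :
    vecMulVec w x * A = vecMulVec w (Aᵀ *ᵥ x) := by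
  ext i j
  simp only [vecMulVec, mul_apply, of_apply, mulVec, dotProduct, transpose_apply]
  rw [Finset.mul_sum]
  exact Finset.sum_congr rfl fun k _ => by ring

lemma vecMulVec_mul_vecMulVec (a b c d : ι → F) :
    vecMulVec a b * vecMulVec c d = (b ⬝ᵥ c) • vecMulVec a d := by
  ext i j
  simp only [vecMulVec, mul_apply, of_apply, dotProduct, Matrix.smul_apply, smul_eq_mul]
  rw [Finset.sum_mul]
  exact Finset.sum_congr rfl fun k _ => by ring

lemma vecMulVec_smul_right (c : F) (x w : ι → F) :
    vecMulVec x (c • w) = c • vecMulVec x w := by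
  ext i j; simp [vecMulVec, mul_comm, mul_left_comm]

lemma vecMulVec_smul_left (c : F) (x w : ι → F) :
    vecMulVec (c • x) w = c • vecMulVec x w := by
  ext i j; simp [vecMulVec, mul_comm, mul_left_comm]

lemma vecMulVec_neg_right (x w : ι → F) : vecMulVec x (-w) = - vecMulVec x w := by
  ext i j; simp [vecMulVec]

lemma tv_mulVec (x : ι → F) (c : F) (y : ι → F) :
    tv x c *ᵥ y = y + (c * Bf y x) • x := by
  rw [tv, add_mulVec, one_mulVec, vecMulVec_mulVec]
  congr 2
  rw [smul_dotProduct, smul_eq_mul]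
  congr 1
  rw [Bf, dotProduct_comm]

lemma tv_fix (x : ι → F) (c : F) (y : ι → F) (hy : Bf y x = 0) : tv x c *ᵥ y = y := by
  rw [tv_mulVec, hy, mul_zero, zero_smul, add_zero]

lemma tv_send (x y : ι → F) (h : Bf x y ≠ 0) : tv (y - x) (Bf x y)⁻¹ *ᵥ x = y := by
  rw [tv_mulVec, Bf_sub_right, Bf_self, sub_zero, inv_mul_cancel₀ h, one_smul]
  abel

lemma tv_det (x : ι → F) (c : F) : (tv x c).det = 1 := by
  rw [tv, vecMulVec_eq Unit, det_one_add_replicateCol_mul_replicateRow]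
  have h0 : (c • (J (Fin n) F *ᵥ x)) ⬝ᵥ x = 0 := by
    rw [smul_dotProduct, dotProduct_comm, smul_eq_mul]
    have : Bf x x = 0 := Bf_self x
    rw [Bf] at this
    rw [this, mul_zero]
  rw [h0, add_zero]

lemma tv_mem (x : ι → F) (c : F) : tv x c ∈ symplecticGroup (Fin n) F := by
  rw [SymplecticGroup.mem_iff']
  have hxz : x ⬝ᵥ (J (Fin n) F *ᵥ x) = 0 := by
    have := Bf_self x; rwa [Bf] at this
  have hT : (tv x c)ᵀ = 1 + vecMulVec (c • (J (Fin n) F *ᵥ x)) x := by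
    rw [tv, transpose_add, transpose_one, vecMulVec_transpose']
  rw [hT, tv]
  set z := J (Fin n) F *ᵥ x with hz
  set Jm := J (Fin n) F with hJ
  have e1 : Jm * vecMulVec x (c • z) = c • vecMulVec z z := by
    rw [mul_vecMulVec, ← hz, vecMulVec_smul_right]
  have e2 : vecMulVec (c • z) x * Jm = -(c • vecMulVec z z) := by
    rw [vecMulVec_mul]
    rw [show Jmᵀ = -Jm from J_transpose (Fin n) F]
    rw [neg_mulVec, ← hz, vecMulVec_neg_right, vecMulVec_smul_left]
  calc (1 + vecMulVec (c • z) x) * Jm * (1 + vecMulVec x (c • z))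
      = Jm + Jm * vecMulVec x (c • z) + vecMulVec (c • z) x * Jm
        + vecMulVec (c • z) x * (Jm * vecMulVec x (c • z)) := by noncomm_ring
    _ = Jm := by
        rw [e1, e2]
        have e3 : vecMulVec (c • z) x * (c • vecMulVec z z) = 0 := by
          rw [mul_smul_comm, vecMulVec_mul_vecMulVec, hxz, zero_smul, smul_zero]
        rw [e3, add_zero, add_neg_cancel_right]

lemma mulVec_dot (A : Matrix ι ι F) (x t : ι → F) :
    (A *ᵥ x) ⬝ᵥ t = x ⬝ᵥ (Aᵀ *ᵥ t) := by
  simp only [mulVec, dotProduct, transpose_apply]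
  have h1 : ∀ i, (∑ j, A i j * x j) * t i = ∑ j, x j * (A i j * t i) := fun i => by
    rw [Finset.sum_mul]; exact Finset.sum_congr rfl fun j _ => by ring
  rw [Finset.sum_congr rfl (fun i _ => h1 i), Finset.sum_comm]
  exact Finset.sum_congr rfl fun j _ => (Finset.mul_sum _ _ _).symm

lemma Bf_mulVec {N : Matrix ι ι F} (hN : N ∈ symplecticGroup (Fin n) F) (x y : ι → F) :
    Bf (N *ᵥ x) (N *ᵥ y) = Bf x y := by
  rw [SymplecticGroup.mem_iff'] at hN
  rw [Bf, Bf, mulVec_mulVec, mulVec_dot, mulVec_mulVec, ← Matrix.mul_assoc, hN]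

lemma exists_w₁ (k : ℕ) {u : ι → F} (hu : Wp k u) (hu0 : u ≠ 0) :
    ∃ w : ι → F, Wp k w ∧ Bf u w ≠ 0 := by
  have hex : ∃ i, u i ≠ 0 := by
    by_contra hc; push_neg at hc; exact hu0 (funext hc)
  obtain ⟨i, hi⟩ := hex
  have hik : ¬ idx i < k := fun hik => hi ((Wp_iff k u).mp hu i hik)
  cases i with
  | inl a =>
    refine ⟨ev (Sum.inr a), Wp_ev k _ hik, ?_⟩
    rw [Bf_neg_swap, Bf_single_inr]
    exact neg_ne_zero.mpr hi
  | inr a =>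
    refine ⟨ev (Sum.inl a), Wp_ev k _ hik, ?_⟩
    rw [Bf_neg_swap, Bf_single_inl, neg_neg]
    exact hi

lemma exists_w (k : ℕ) {u v : ι → F} (hu : Wp k u) (hv : Wp k v) (hu0 : u ≠ 0) (hv0 : v ≠ 0) :
    ∃ w : ι → F, Wp k w ∧ Bf u w ≠ 0 ∧ Bf v w ≠ 0 := by
  obtain ⟨w₁, hw₁, hB₁⟩ := exists_w₁ k hu hu0
  obtain ⟨w₂, hw₂, hB₂⟩ := exists_w₁ k hv hv0
  by_cases h1 : Bf v w₁ ≠ 0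
  · exact ⟨w₁, hw₁, hB₁, h1⟩
  by_cases h2 : Bf u w₂ ≠ 0
  · exact ⟨w₂, hw₂, h2, hB₂⟩
  push_neg at h1 h2
  refine ⟨w₁ + w₂, Wp_add k hw₁ hw₂, ?_, ?_⟩
  · rw [Bf_add_right, h2, add_zero]; exact hB₁
  · rw [Bf_add_right, h1, zero_add]; exact hB₂

lemma moveVec (k : ℕ) {u v : ι → F} (hu : Wp k u) (hv : Wp k v) (hu0 : u ≠ 0) (hv0 : v ≠ 0) :
    ∃ T : Matrix ι ι F, T ∈ symplecticGroup (Fin n) F ∧ T.det = 1 ∧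
      (∀ j : ι, idx j < k → T *ᵥ ev j = ev j) ∧ T *ᵥ u = v := by
  by_cases hB : Bf u v = 0
  · obtain ⟨w, hw, hBuw, hBvw⟩ := exists_w k hu hv hu0 hv0
    have hBwv : Bf w v ≠ 0 := by
      rw [Bf_neg_swap]; exact neg_ne_zero.mpr hBvw
    refine ⟨tv (v - w) (Bf w v)⁻¹ * tv (w - u) (Bf u w)⁻¹,
      mul_mem (tv_mem _ _) (tv_mem _ _),
      by rw [det_mul, tv_det, tv_det, one_mul], ?_, ?_⟩
    · intro j hj
      rw [← mulVec_mulVec, tv_fix _ _ _ (Wp_sub k hw hu j hj),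
        tv_fix _ _ _ (Wp_sub k hv hw j hj)]
    · rw [← mulVec_mulVec, tv_send u w hBuw, tv_send w v hBwv]
  · refine ⟨tv (v - u) (Bf u v)⁻¹, tv_mem _ _, tv_det _ _, ?_, tv_send u v hB⟩
    intro j hj
    exact tv_fix _ _ _ (Wp_sub k hv hu j hj)

lemma move2 (k : ℕ) (a : Fin n) (ha : ¬ (a : ℕ) < k) (z : ι → F) (hz : Wp k z)
    (hze : Bf (ev (Sum.inl a)) z = -1) :
    ∃ T : Matrix ι ι F, T ∈ symplecticGroup (Fin n) F ∧ T.det = 1 ∧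
      (∀ j : ι, idx j < k → T *ᵥ ev j = ev j) ∧
      T *ᵥ ev (Sum.inl a) = ev (Sum.inl a) ∧ T *ᵥ z = ev (Sum.inr a) := by
  have hWe : Wp k (ev (Sum.inl a) : ι → F) := Wp_ev k _ ha
  have hWf : Wp k (ev (Sum.inr a) : ι → F) := Wp_ev k _ ha
  have hBef : Bf (ev (Sum.inl a)) (ev (Sum.inr a) : ι → F) = -1 := hef a
  by_cases hB : Bf z (ev (Sum.inr a) : ι → F) = 0
  · -- two steps through w = e + f
    set e := (ev (Sum.inl a) : ι → F)
    set f := (ev (Sum.inr a) : ι → F)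
    have hze' : Bf z e = 1 := by rw [Bf_neg_swap, hze, neg_neg]
    have hBzw : Bf z (e + f) = 1 := by rw [Bf_add_right, hze', hB, add_zero]
    have hBwf : Bf (e + f) f = -1 := by rw [Bf_add_left, Bf_self, add_zero, hBef]
    have hBew : Bf e (e + f) = -1 := by rw [Bf_add_right, Bf_self, zero_add, hBef]
    refine ⟨tv (f - (e + f)) (Bf (e + f) f)⁻¹ * tv ((e + f) - z) (Bf z (e + f))⁻¹,
      mul_mem (tv_mem _ _) (tv_mem _ _),
      by rw [det_mul, tv_det, tv_det, one_mul], ?_, ?_, ?_⟩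
    · intro j hj
      rw [← mulVec_mulVec, tv_fix _ _ _ (Wp_sub k (Wp_add k hWe hWf) hz j hj),
        tv_fix _ _ _ (Wp_sub k hWf (Wp_add k hWe hWf) j hj)]
    · have h1 : Bf e ((e + f) - z) = 0 := by
        rw [Bf_sub_right, hBew, hze, sub_self]
      have h2 : Bf e (f - (e + f)) = 0 := by
        rw [Bf_sub_right, hBef, hBew, sub_self]
      rw [← mulVec_mulVec, tv_fix _ _ _ h1, tv_fix _ _ _ h2]
    · rw [← mulVec_mulVec, tv_send z (e + f) (by rw [hBzw]; exact one_ne_zero),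
        tv_send (e + f) f (by rw [hBwf]; exact neg_ne_zero.mpr one_ne_zero)]
  · refine ⟨tv (ev (Sum.inr a) - z) (Bf z (ev (Sum.inr a)))⁻¹, tv_mem _ _, tv_det _ _,
      ?_, ?_, tv_send z _ hB⟩
    · intro j hj
      exact tv_fix _ _ _ (Wp_sub k hWf hz j hj)
    · apply tv_fix
      rw [Bf_sub_right, hBef, hze, sub_self]

theorem det_eq_one_of_mem_symplectic {M : Matrix ι ι F}
    (hM : M ∈ symplecticGroup (Fin n) F) : M.det = 1 := by
  have main : ∀ k : ℕ, k ≤ n → ∃ Q : Matrix ι ι F, Q ∈ symplecticGroup (Fin n) F ∧ Q.det = 1 ∧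
      ∀ j : ι, idx j < k → (Q * M) *ᵥ ev j = ev j := by
    intro k
    induction k with
    | zero => exact fun _ => ⟨1, one_mem _, det_one, fun j hj => absurd hj (Nat.not_lt_zero _)⟩
    | succ k ih =>
      intro hk1
      obtain ⟨Q, hQ, hQdet, hQfix⟩ := ih (Nat.le_of_succ_le hk1)
      have hNmem : Q * M ∈ symplecticGroup (Fin n) F := mul_mem hQ hM
      have hkn : k < n := hk1
      set a : Fin n := ⟨k, hkn⟩ with haa
      have ha : ¬ ((a : ℕ) < k) := lt_irrefl k
      have hWe : Wp k (ev (Sum.inl a) : ι → F) := Wp_ev k _ ha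
      have hWu : Wp k ((Q * M) *ᵥ ev (Sum.inl a)) := by
        intro j hj
        calc Bf (ev j) ((Q * M) *ᵥ ev (Sum.inl a))
            = Bf ((Q * M) *ᵥ ev j) ((Q * M) *ᵥ ev (Sum.inl a)) := by rw [hQfix j hj]
          _ = Bf (ev j) (ev (Sum.inl a)) := Bf_mulVec hNmem _ _
          _ = 0 := hWe j hj
      have hu0 : (Q * M) *ᵥ ev (Sum.inl a) ≠ 0 := by
        intro h0
        have h1 : Bf ((Q * M) *ᵥ ev (Sum.inl a)) ((Q * M) *ᵥ ev (Sum.inr a))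
            = Bf (ev (Sum.inl a)) (ev (Sum.inr a) : ι → F) := Bf_mulVec hNmem _ _
        rw [h0, Bf_zero_left, hef a] at h1
        exact (neg_ne_zero.mpr one_ne_zero) h1.symm
      obtain ⟨T₁, hT₁mem, hT₁det, hT₁fix, hT₁send⟩ :=
        moveVec k hWu hWe hu0 (ev_ne_zero _)
      have hN₁mem : T₁ * (Q * M) ∈ symplecticGroup (Fin n) F := mul_mem hT₁mem hNmem
      have hN₁fix : ∀ j : ι, idx j < k → (T₁ * (Q * M)) *ᵥ ev j = ev j := fun j hj => by
        rw [← mulVec_mulVec, hQfix j hj, hT₁fix j hj]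
      have hN₁e : (T₁ * (Q * M)) *ᵥ ev (Sum.inl a) = ev (Sum.inl a) := by
        rw [← mulVec_mulVec, hT₁send]
      have hWz : Wp k ((T₁ * (Q * M)) *ᵥ ev (Sum.inr a)) := by
        intro j hj
        calc Bf (ev j) ((T₁ * (Q * M)) *ᵥ ev (Sum.inr a))
            = Bf ((T₁ * (Q * M)) *ᵥ ev j) ((T₁ * (Q * M)) *ᵥ ev (Sum.inr a)) := by
              rw [hN₁fix j hj]
          _ = Bf (ev j) (ev (Sum.inr a)) := Bf_mulVec hN₁mem _ _
          _ = 0 := (Wp_ev k (Sum.inr a) (by exact ha)) j hj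
      have hze : Bf (ev (Sum.inl a)) ((T₁ * (Q * M)) *ᵥ ev (Sum.inr a)) = -1 := by
        calc Bf (ev (Sum.inl a)) ((T₁ * (Q * M)) *ᵥ ev (Sum.inr a))
            = Bf ((T₁ * (Q * M)) *ᵥ ev (Sum.inl a)) ((T₁ * (Q * M)) *ᵥ ev (Sum.inr a)) := by
              rw [hN₁e]
          _ = Bf (ev (Sum.inl a)) (ev (Sum.inr a)) := Bf_mulVec hN₁mem _ _
          _ = -1 := hef a
      obtain ⟨T₂, hT₂mem, hT₂det, hT₂fix, hT₂e, hT₂z⟩ := move2 k a ha _ hWz hze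
      refine ⟨T₂ * T₁ * Q, mul_mem (mul_mem hT₂mem hT₁mem) hQ,
        by rw [det_mul, det_mul, hT₂det, hT₁det, hQdet, one_mul, one_mul], ?_⟩
      intro j hj
      have hassoc : T₂ * T₁ * Q * M = T₂ * (T₁ * (Q * M)) := by
        rw [Matrix.mul_assoc, Matrix.mul_assoc]
      rw [hassoc, ← mulVec_mulVec]
      rcases j with c | c
      · rcases Nat.lt_succ_iff_lt_or_eq.mp hj with hcase | hcase
        · rw [hN₁fix _ hcase, hT₂fix _ hcase]
        · have hca : c = a := Fin.ext hcase
          rw [hca, hN₁e, hT₂e]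
      · rcases Nat.lt_succ_iff_lt_or_eq.mp hj with hcase | hcase
        · rw [hN₁fix _ hcase, hT₂fix _ hcase]
        · have hca : c = a := Fin.ext hcase
          rw [hca, hT₂z]
  obtain ⟨Q, hQ, hQdet, hfixall⟩ := main n le_rfl
  have hQM : Q * M = 1 := by
    ext i j
    have hjlt : idx j < n := by cases j with
      | inl c => exact c.is_lt
      | inr c => exact c.is_lt
    have hcol := congrFun (hfixall j hjlt) i
    rw [ev, mulVec_single] at hcol
    have hcol2 : (Q * M) i j * 1 = (Pi.single j 1 : (Fin n ⊕ Fin n) → F) i := by exact hcol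
    rw [mul_one] at hcol2
    rw [hcol2, Matrix.one_apply, Pi.single_apply]
  have hdet : Q.det * M.det = 1 := by rw [← det_mul, hQM, det_one]
  rw [hQdet, one_mul] at hdet
  exact hdet

end SympAux

variable (R : Type) [CommRing R] [IsLocalRing R] [IsPrincipalIdealRing R] [Finite R]
variable (p : R) (ℓ q : ℕ)

set_option maxHeartbeats 2000000 in
theorem stmt18
    (hℓ : 1 ≤ ℓ)
    (hmax : IsLocalRing.maximalIdeal R = Ideal.span {p})
    (hnil : Ideal.span {p} ^ ℓ = (⊥ : Ideal R))
    (hnil' : Ideal.span {p} ^ (ℓ - 1) ≠ (⊥ : Ideal R))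
    (hq : Nat.card (IsLocalRing.ResidueField R) = q)
    (hodd : Odd q)
    (σ : Aext R p ℓ →ₐ[R] Aext R p ℓ)
    (hσ : σ (piA R p ℓ) = - piA R p ℓ)
    (V : Type) [AddCommGroup V] [Module (Aext R p ℓ) V] [Module R V]
    [IsScalarTower R (Aext R p ℓ) V]
    (n : ℕ) (hn : 1 ≤ n)
    (b : Module.Basis (Fin n ⊕ Fin n) (Aext R p ℓ) V)
    (h : V → V → Aext R p ℓ)
    (hadd : ∀ v v' w : V, h (v + v') w = h v w + h v' w)
    (hs1 : ∀ (a : Aext R p ℓ) (v w : V), h (a • v) w = σ a * h v w)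
    (hs2 : ∀ (a : Aext R p ℓ) (v w : V), h v (a • w) = a * h v w)
    (hsk : ∀ v w : V, h w v = - σ (h v w))
    (hb1 : ∀ i j, h (b (Sum.inl i)) (b (Sum.inr j)) = if i = j then 1 else 0)
    (hb2 : ∀ i j, h (b (Sum.inl i)) (b (Sum.inl j)) = 0)
    (hb3 : ∀ i j, h (b (Sum.inr i)) (b (Sum.inr j)) = 0)
    (hn1 : 1 < n)
    (hclass : ∀ u v : V,
      u ∉ (Ideal.span {piA R p ℓ} • (⊤ : Submodule (Aext R p ℓ) V) :
        Submodule (Aext R p ℓ) V) →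
      v ∉ (Ideal.span {piA R p ℓ} • (⊤ : Submodule (Aext R p ℓ) V) :
        Submodule (Aext R p ℓ) V) →
      ((∃ g : V ≃ₗ[Aext R p ℓ] V, (∀ x y : V, h (g x) (g y) = h x y) ∧ g u = v) ↔
        h u u = h v v)) :
    ∀ u v : V,
      u ∉ (Ideal.span {piA R p ℓ} • (⊤ : Submodule (Aext R p ℓ) V) :
        Submodule (Aext R p ℓ) V) →
      v ∉ (Ideal.span {piA R p ℓ} • (⊤ : Submodule (Aext R p ℓ) V) :
        Submodule (Aext R p ℓ) V) →
      h u u = h v v →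
      ∃ g : V ≃ₗ[Aext R p ℓ] V,
        (∀ x y : V, h (g x) (g y) = h x y) ∧
        LinearMap.det (g : V →ₗ[Aext R p ℓ] V) = 1 ∧ g u = v := by
  classical
  intro u v hu hv huv
  -- Part II : ring theory of A
  have hpmem : p ∈ IsLocalRing.maximalIdeal R := by
    rw [hmax]; exact Ideal.subset_span (Set.mem_singleton p)
  obtain ⟨θ, hθmk⟩ : ∃ θ : Aext R p ℓ →+* IsLocalRing.ResidueField R,
      ∀ f : Polynomial R,
        θ (Ideal.Quotient.mk (Ideal.span ({X ^ 2 - C p, X ^ (2 * ℓ - 1)} : Set (Polynomial R))) f)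
          = IsLocalRing.residue R (Polynomial.eval 0 f) := by
    have hker : ∀ f ∈ Ideal.span ({X ^ 2 - C p, X ^ (2 * ℓ - 1)} : Set (Polynomial R)),
        ((IsLocalRing.residue R).comp (Polynomial.evalRingHom 0)) f = 0 := by
      intro f hf
      have hsub : Ideal.span ({X ^ 2 - C p, X ^ (2 * ℓ - 1)} : Set (Polynomial R))
          ≤ RingHom.ker ((IsLocalRing.residue R).comp (Polynomial.evalRingHom 0)) := by
        rw [Ideal.span_le]
        rintro g hg
        simp only [Set.mem_insert_iff, Set.mem_singleton_iff] at hg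
        rcases hg with rfl | rfl
        · rw [SetLike.mem_coe, RingHom.mem_ker, RingHom.comp_apply]
          simp only [Polynomial.coe_evalRingHom, Polynomial.eval_sub, Polynomial.eval_pow,
            Polynomial.eval_X, Polynomial.eval_C]
          rw [show (0:R)^2 - p = -p by ring, _root_.map_neg, neg_eq_zero]
          exact Ideal.Quotient.eq_zero_iff_mem.mpr hpmem
        · rw [SetLike.mem_coe, RingHom.mem_ker, RingHom.comp_apply]
          simp only [Polynomial.coe_evalRingHom, Polynomial.eval_pow, Polynomial.eval_X]
          rw [zero_pow (by omega), _root_.map_zero]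
      exact RingHom.mem_ker.mp (hsub hf)
    exact ⟨Ideal.Quotient.lift _ _ hker, fun f => Ideal.Quotient.lift_mk _ _ _⟩
  have hθπ : θ (piA R p ℓ) = 0 := by
    rw [piA, hθmk X, Polynomial.eval_X, _root_.map_zero]
  have hθalg : ∀ r : R, θ (algebraMap R (Aext R p ℓ) r) = IsLocalRing.residue R r := by
    intro r
    rw [IsScalarTower.algebraMap_apply R (Polynomial R) (Aext R p ℓ) r,
      Ideal.Quotient.algebraMap_eq, Polynomial.algebraMap_eq, hθmk, Polynomial.eval_C]
  have hθsurj : Function.Surjective θ := by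
    intro y
    obtain ⟨r, rfl⟩ := IsLocalRing.residue_surjective y
    exact ⟨algebraMap R _ r, hθalg r⟩
  have hπsq : piA R p ℓ * piA R p ℓ = algebraMap R (Aext R p ℓ) p := by
    have h0 : Ideal.Quotient.mk
        (Ideal.span ({X ^ 2 - C p, X ^ (2 * ℓ - 1)} : Set (Polynomial R))) (X ^ 2 - C p) = 0 :=
      Ideal.Quotient.eq_zero_iff_mem.mpr (Ideal.subset_span (by simp))
    rw [_root_.map_sub, sub_eq_zero] at h0
    rw [piA, ← _root_.map_mul, ← pow_two, h0,
      IsScalarTower.algebraMap_apply R (Polynomial R) (Aext R p ℓ) p,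
      Ideal.Quotient.algebraMap_eq, Polynomial.algebraMap_eq]
  have hπpow : piA R p ℓ ^ (2 * ℓ - 1) = 0 := by
    rw [piA, ← _root_.map_pow]
    exact Ideal.Quotient.eq_zero_iff_mem.mpr (Ideal.subset_span (by simp))
  have hker' : ∀ a : Aext R p ℓ, θ a = 0 → ∃ t0 : Aext R p ℓ, a = piA R p ℓ * t0 := by
    intro a ha
    obtain ⟨f, rfl⟩ := Ideal.Quotient.mk_surjective a
    rw [hθmk] at ha
    have h0 : Polynomial.eval 0 f ∈ IsLocalRing.maximalIdeal R :=
      Ideal.Quotient.eq_zero_iff_mem.mp ha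
    rw [hmax, Ideal.mem_span_singleton] at h0
    obtain ⟨r, hr⟩ := h0
    refine ⟨Ideal.Quotient.mk _ f.divX + piA R p ℓ * algebraMap R (Aext R p ℓ) r, ?_⟩
    have hfd : X * f.divX + C (Polynomial.eval 0 f) = f := by
      rw [← Polynomial.coeff_zero_eq_eval_zero]; exact Polynomial.X_mul_divX_add f
    have hCr : Ideal.Quotient.mk
        (Ideal.span ({X ^ 2 - C p, X ^ (2 * ℓ - 1)} : Set (Polynomial R)))
          (C (Polynomial.eval 0 f))
        = piA R p ℓ * piA R p ℓ * algebraMap R (Aext R p ℓ) r := by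
      have hCmk : ∀ s : R, Ideal.Quotient.mk
          (Ideal.span ({X ^ 2 - C p, X ^ (2 * ℓ - 1)} : Set (Polynomial R))) (C s)
          = algebraMap R (Aext R p ℓ) s := by
        intro s
        rw [IsScalarTower.algebraMap_apply R (Polynomial R) (Aext R p ℓ) s,
          Ideal.Quotient.algebraMap_eq, Polynomial.algebraMap_eq]
      rw [hr, hCmk, _root_.map_mul, hπsq]
    have hmkX : Ideal.Quotient.mk
        (Ideal.span ({X ^ 2 - C p, X ^ (2 * ℓ - 1)} : Set (Polynomial R))) X = piA R p ℓ := rfl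
    calc Ideal.Quotient.mk _ f
        = Ideal.Quotient.mk _ (X * f.divX + C (Polynomial.eval 0 f)) := by rw [hfd]
      _ = piA R p ℓ * Ideal.Quotient.mk _ f.divX
          + piA R p ℓ * piA R p ℓ * algebraMap R (Aext R p ℓ) r := by
          rw [_root_.map_add, _root_.map_mul, hCr, hmkX]
      _ = piA R p ℓ * (Ideal.Quotient.mk _ f.divX + piA R p ℓ * algebraMap R (Aext R p ℓ) r) := by
          ring
  have hunit : ∀ a : Aext R p ℓ, θ a ≠ 0 → IsUnit a := by
    intro a ha
    obtain ⟨cc, hcc0⟩ := hθsurj (θ a)⁻¹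
    have h0 : θ (a * cc - 1) = 0 := by
      rw [_root_.map_sub, _root_.map_mul, hcc0, _root_.map_one, mul_inv_cancel₀ ha, sub_self]
    obtain ⟨t0, ht0⟩ := hker' _ h0
    have hnil0 : IsNilpotent (piA R p ℓ * t0) :=
      ⟨2 * ℓ - 1, by rw [mul_pow, hπpow, zero_mul]⟩
    have h1 : a * cc = 1 + piA R p ℓ * t0 := by rw [← ht0]; ring
    have h2 : IsUnit (a * cc) := by rw [h1]; exact hnil0.isUnit_one_add
    exact isUnit_of_mul_isUnit_left h2
  have haev : ∀ f : Polynomial R,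
      Polynomial.aeval (piA R p ℓ) f
        = Ideal.Quotient.mk
            (Ideal.span ({X ^ 2 - C p, X ^ (2 * ℓ - 1)} : Set (Polynomial R))) f := by
    intro f
    have h1 : (Polynomial.aeval (piA R p ℓ) : Polynomial R →ₐ[R] Aext R p ℓ)
        = Ideal.Quotient.mkₐ R _ := by
      apply Polynomial.algHom_ext
      rw [Polynomial.aeval_X, Ideal.Quotient.mkₐ_eq_mk]
      rfl
    rw [h1, Ideal.Quotient.mkₐ_eq_mk]
  have hθσ : ∀ a : Aext R p ℓ, θ (σ a) = θ a := by
    intro a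
    obtain ⟨f, rfl⟩ := Ideal.Quotient.mk_surjective a
    rw [← haev f, ← Polynomial.aeval_algHom_apply σ (piA R p ℓ) f, hσ]
    rw [Polynomial.aeval_def, Polynomial.aeval_def, Polynomial.hom_eval₂, Polynomial.hom_eval₂]
    have harg : θ (-piA R p ℓ) = θ (piA R p ℓ) := by rw [_root_.map_neg, hθπ, neg_zero]
    rw [harg]
  have hσσ : ∀ a : Aext R p ℓ, σ (σ a) = a := by
    intro a
    obtain ⟨f, rfl⟩ := Ideal.Quotient.mk_surjective a
    rw [← haev f, ← Polynomial.aeval_algHom_apply σ (piA R p ℓ) f, hσ,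
      ← Polynomial.aeval_algHom_apply σ (- piA R p ℓ) f, _root_.map_neg, hσ, neg_neg]
  haveI : Finite (IsLocalRing.ResidueField R) :=
    Finite.of_surjective _ IsLocalRing.residue_surjective
  have h2F : (2 : IsLocalRing.ResidueField R) ≠ 0 := by
    intro h2
    have hcard : ((q : ℕ) : IsLocalRing.ResidueField R) = 0 := by
      haveI : Fintype (IsLocalRing.ResidueField R) := Fintype.ofFinite _
      rw [← hq, Nat.card_eq_fintype_card]
      exact Nat.cast_card_eq_zero _
    obtain ⟨m, hm⟩ := hodd
    rw [hm] at hcard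
    push_cast at hcard
    rw [h2] at hcard
    have h1 : (1 : IsLocalRing.ResidueField R) = 0 := by
      calc (1 : IsLocalRing.ResidueField R) = 0 * (m : IsLocalRing.ResidueField R) + 1 := by ring
      _ = 0 := hcard
    exact one_ne_zero h1
  have hθ2 : θ 2 = 2 := by rw [_root_.map_ofNat]
  have h2A : IsUnit (2 : Aext R p ℓ) := hunit 2 (by rw [hθ2]; exact h2F)
  obtain ⟨i2, hi2⟩ := h2A.exists_right_inv
  have hσ2 : σ (2 : Aext R p ℓ) = 2 := by rw [_root_.map_ofNat]
  have hσi2 : σ i2 = i2 := by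
    have h1 : 2 * σ i2 = 1 := by
      rw [← hσ2, ← _root_.map_mul, hi2, _root_.map_one]
    calc σ i2 = (2 * i2) * σ i2 := by rw [hi2, one_mul]
    _ = i2 * (2 * σ i2) := by ring
    _ = i2 := by rw [h1, mul_one]
  -- Part III : the hermitian form, sums, and the matrix relation
  set c : Aext R p ℓ := h u u with hc
  have hσc : σ c = -c := by
    have h1 : c = - σ c := hsk u u
    linear_combination h1
  have hadd2 : ∀ x y y' : V, h x (y + y') = h x y + h x y' := by
    intro x y y'
    rw [hsk (y + y') x, hadd, _root_.map_add, neg_add, ← hsk y x, ← hsk y' x]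
  have hsumleft : ∀ (s : Finset (Fin n ⊕ Fin n)) (f : (Fin n ⊕ Fin n) → V) (y : V),
      h (∑ i ∈ s, f i) y = ∑ i ∈ s, h (f i) y := by
    intro s f y
    exact _root_.map_sum (AddMonoidHom.mk' (fun x => h x y) (fun a₁ b₁ => hadd a₁ b₁ y)) f s
  have hsumright : ∀ (s : Finset (Fin n ⊕ Fin n)) (f : (Fin n ⊕ Fin n) → V) (x : V),
      h x (∑ i ∈ s, f i) = ∑ i ∈ s, h x (f i) := by
    intro s f x
    exact _root_.map_sum (AddMonoidHom.mk' (fun y => h x y) (fun a₁ b₁ => hadd2 x a₁ b₁)) f s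
  have hsum' : ∀ φ ψ : (Fin n ⊕ Fin n) → Aext R p ℓ,
      h (∑ i, φ i • b i) (∑ k, ψ k • b k)
        = ∑ i, ∑ k, σ (φ i) * (ψ k * h (b i) (b k)) := by
    intro φ ψ
    rw [hsumleft]
    refine Finset.sum_congr rfl fun i _ => ?_
    rw [hs1, hsumright, Finset.mul_sum]
    refine Finset.sum_congr rfl fun k _ => ?_
    rw [hs2]
  set Hm : Matrix (Fin n ⊕ Fin n) (Fin n ⊕ Fin n) (Aext R p ℓ) :=
    Matrix.of (fun i k => h (b i) (b k)) with hHmdef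
  have hHmapp : ∀ i k, Hm i k = h (b i) (b k) := fun i k => rfl
  have hHm : Hm = -(Matrix.J (Fin n) (Aext R p ℓ)) := by
    ext i k
    rw [hHmapp]
    rcases i with i | i <;> rcases k with k | k
    · rw [hb2 i k]
      simp [Matrix.J]
    · rw [hb1 i k]
      simp [Matrix.J, Matrix.one_apply]
    · rw [hsk (b (Sum.inl k)) (b (Sum.inr i)), hb1 k i]
      simp only [Matrix.J, Matrix.neg_apply, Matrix.fromBlocks_apply₂₁, Matrix.one_apply]
      rw [apply_ite ⇑σ, _root_.map_one, _root_.map_zero]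
      by_cases hik : k = i
      · subst hik; simp
      · rw [if_neg hik, if_neg (Ne.symm hik), neg_zero]
    · rw [hb3 i k]
      simp [Matrix.J]
  have keyU : ∀ g : V ≃ₗ[Aext R p ℓ] V, (∀ x y : V, h (g x) (g y) = h x y) →
      θ (LinearMap.det (g : V →ₗ[Aext R p ℓ] V)) = 1 ∧
        σ (LinearMap.det (g : V →ₗ[Aext R p ℓ] V))
          * LinearMap.det (g : V →ₗ[Aext R p ℓ] V) = 1 := by
    intro g hg
    set G := LinearMap.toMatrix b b (g : V →ₗ[Aext R p ℓ] V) with hG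
    have hrepg : ∀ j, g (b j) = ∑ i, G i j • b i := by
      intro j
      conv_lhs => rw [← Module.Basis.sum_repr b (g (b j))]
      refine Finset.sum_congr rfl fun i _ => ?_
      congr 1
      rw [hG, LinearMap.toMatrix_apply]
      simp
    have hmat : (G.map ⇑σ)ᵀ * Hm * G = Hm := by
      ext a cc
      have hexp := hsum' (fun i => G i a) (fun k => G k cc)
      rw [← hrepg a, ← hrepg cc, hg] at hexp
      have inner : ∀ k, ((G.map ⇑σ)ᵀ * Hm) a k = ∑ i, σ (G i a) * Hm i k := by
        intro k
        rw [Matrix.mul_apply]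
        refine Finset.sum_congr rfl fun i _ => ?_
        rw [Matrix.transpose_apply, Matrix.map_apply]
      calc ((G.map ⇑σ)ᵀ * Hm * G) a cc
          = ∑ k, ((G.map ⇑σ)ᵀ * Hm) a k * G k cc := Matrix.mul_apply
        _ = ∑ k, ∑ i, σ (G i a) * Hm i k * G k cc := by
            refine Finset.sum_congr rfl fun k _ => ?_
            rw [inner k, Finset.sum_mul]
        _ = ∑ i, ∑ k, σ (G i a) * Hm i k * G k cc := Finset.sum_comm
        _ = ∑ i, ∑ k, σ (G i a) * (G k cc * h (b i) (b k)) := by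
            refine Finset.sum_congr rfl fun i _ => Finset.sum_congr rfl fun k _ => ?_
            rw [hHmapp]
            ring
        _ = h (b a) (b cc) := hexp.symm
        _ = Hm a cc := (hHmapp a cc).symm
    constructor
    · have hmth : (((G.map ⇑σ)ᵀ * Hm * G)).map ⇑θ = Hm.map ⇑θ := by rw [hmat]
      rw [Matrix.map_mul, Matrix.map_mul, Matrix.transpose_map] at hmth
      have hσθG : (G.map ⇑σ).map ⇑θ = G.map ⇑θ := by
        ext i j; simp [Matrix.map_apply, hθσ]
      have hHθ : Hm.map ⇑θ = -(Matrix.J (Fin n) (IsLocalRing.ResidueField R)) := by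
        rw [hHm]
        ext i j
        rcases i with i | i <;> rcases j with j | j <;>
          simp [Matrix.J, Matrix.map_apply, Matrix.one_apply, apply_ite ⇑θ]
      rw [hσθG, hHθ] at hmth
      rw [Matrix.mul_neg, Matrix.neg_mul, neg_inj] at hmth
      have hdet1 : (G.map ⇑θ).det = 1 :=
        SympAux.det_eq_one_of_mem_symplectic (SymplecticGroup.mem_iff'.mpr hmth)
      rw [← LinearMap.det_toMatrix b, ← hG, RingHom.map_det, RingHom.mapMatrix_apply, hdet1]
    · have hdetrel := congrArg Matrix.det hmat
      rw [Matrix.det_mul, Matrix.det_mul, Matrix.det_transpose] at hdetrel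
      have hσdet : (G.map ⇑σ).det = σ G.det := by
        have h1 := RingHom.map_det σ.toRingHom G
        rw [RingHom.mapMatrix_apply] at h1
        simpa using h1.symm
      rw [hσdet] at hdetrel
      have hHdet : IsUnit Hm.det := by
        rw [hHm, Matrix.det_neg]
        exact ((isUnit_one.neg).pow _).mul (Matrix.isUnit_det_J (Fin n) (Aext R p ℓ))
      have h1 : Hm.det * (σ G.det * G.det) = Hm.det * 1 := by linear_combination hdetrel
      have h2 := hHdet.mul_left_cancel h1
      rw [← LinearMap.det_toMatrix b, ← hG]
      exact h2
  have hinv : ∀ g : V ≃ₗ[Aext R p ℓ] V,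
      LinearMap.det (g.symm : V →ₗ[Aext R p ℓ] V)
        * LinearMap.det (g : V →ₗ[Aext R p ℓ] V) = 1 := by
    intro g
    rw [← LinearMap.det_comp]
    have h1 : (g.symm : V →ₗ[Aext R p ℓ] V) ∘ₗ (g : V →ₗ[Aext R p ℓ] V) = LinearMap.id := by
      ext x
      simp
    rw [h1, LinearMap.det_id]
  -- Part IV : the vector w and the correction
  set i0 : Fin n := ⟨0, by omega⟩ with hi0
  set i1 : Fin n := ⟨1, hn1⟩ with hi1
  have hi01 : i0 ≠ i1 := by
    rw [hi0, hi1]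
    intro hcon
    exact absurd (congrArg Fin.val hcon) (by simp)
  set γ : Aext R p ℓ := i2 * c with hγ
  have hσγ : σ γ = -γ := by
    rw [hγ, _root_.map_mul, hσi2, hσc]
    ring
  set w : V := b (Sum.inl i0) + γ • b (Sum.inr i0) with hw
  have hbval1 : h (b (Sum.inl i0)) (b (Sum.inr i0)) = 1 := by rw [hb1]; simp
  have hbval2 : h (b (Sum.inr i0)) (b (Sum.inl i0)) = -1 := by
    rw [hsk (b (Sum.inl i0)) (b (Sum.inr i0)), hbval1, _root_.map_one]
  have h2γ : γ + γ = c := by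
    have h1 : γ + γ = 2 * i2 * c := by rw [hγ]; ring
    rw [h1, hi2, one_mul]
  have hval : h w w = c := by
    have e2 : h (b (Sum.inl i0)) (b (Sum.inl i0) + γ • b (Sum.inr i0)) = γ := by
      rw [hadd2, hs2, hb2, hbval1, mul_one, zero_add]
    have e3 : h (b (Sum.inr i0)) (b (Sum.inl i0) + γ • b (Sum.inr i0)) = -1 := by
      rw [hadd2, hs2, hbval2, hb3, mul_zero, add_zero]
    rw [hw, hadd, hs1, e2, e3, hσγ]
    calc γ + -γ * -1 = γ + γ := by ring
    _ = c := h2γ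
  have hmemrep : ∀ x : V,
      x ∈ (Ideal.span {piA R p ℓ} • (⊤ : Submodule (Aext R p ℓ) V) :
        Submodule (Aext R p ℓ) V) →
      ∀ i, b.repr x i ∈ Ideal.span {piA R p ℓ} := by
    intro x hx
    refine Submodule.smul_induction_on hx ?_ ?_
    · intro r hr m _ i
      rw [_root_.map_smul, Finsupp.smul_apply, smul_eq_mul]
      exact Ideal.mul_mem_right _ _ hr
    · intro x₁ x₂ h₁ h₂ i
      rw [_root_.map_add, Finsupp.add_apply]
      exact Ideal.add_mem _ (h₁ i) (h₂ i)
  have hwmem : w ∉ (Ideal.span {piA R p ℓ} • (⊤ : Submodule (Aext R p ℓ) V) :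
      Submodule (Aext R p ℓ) V) := by
    intro hcontra
    have h1 := hmemrep w hcontra (Sum.inl i0)
    have h2 : b.repr w (Sum.inl i0) = 1 := by
      rw [hw, _root_.map_add, _root_.map_smul, Module.Basis.repr_self, Module.Basis.repr_self, Finsupp.add_apply,
        Finsupp.smul_apply, Finsupp.single_eq_same,
        Finsupp.single_eq_of_ne (by simp : (Sum.inl i0 : Fin n ⊕ Fin n) ≠ Sum.inr i0),
        smul_zero, add_zero]
    rw [h2, Ideal.mem_span_singleton] at h1
    obtain ⟨t0, ht0⟩ := h1
    have h3 := congrArg θ ht0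
    rw [_root_.map_one, _root_.map_mul, hθπ, zero_mul] at h3
    exact one_ne_zero h3
  obtain ⟨g₁, hg₁h, hg₁u⟩ := (hclass u w hu hwmem).mpr (by rw [hval, hc])
  obtain ⟨g₂, hg₂h, hg₂v⟩ := (hclass v w hv hwmem).mpr (by rw [hval]; exact huv.symm)
  obtain ⟨hθd₁, hνd₁⟩ := keyU g₁ hg₁h
  obtain ⟨hθd₂, hνd₂⟩ := keyU g₂ hg₂h
  set d₁ := LinearMap.det (g₁ : V →ₗ[Aext R p ℓ] V) with hd₁
  set d₂ := LinearMap.det (g₂ : V →ₗ[Aext R p ℓ] V) with hd₂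
  set d₁' := LinearMap.det (g₁.symm : V →ₗ[Aext R p ℓ] V) with hd₁'
  set d₂' := LinearMap.det (g₂.symm : V →ₗ[Aext R p ℓ] V) with hd₂'
  have hinv₁ : d₁' * d₁ = 1 := hinv g₁
  have hinv₂ : d₂' * d₂ = 1 := hinv g₂
  have hθd₁' : θ d₁' = 1 := by
    have h1 := congrArg θ hinv₁
    rw [_root_.map_mul, _root_.map_one, hθd₁, mul_one] at h1
    exact h1
  have hνd₁' : σ d₁' * d₁' = 1 := by
    have h1 : (σ d₁' * d₁') * (σ d₁ * d₁) = 1 := by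
      have h2 := congrArg σ hinv₁
      rw [_root_.map_mul, _root_.map_one] at h2
      calc (σ d₁' * d₁') * (σ d₁ * d₁) = (σ d₁' * σ d₁) * (d₁' * d₁) := by ring
      _ = (σ d₁' * σ d₁) * 1 := by rw [hinv₁]
      _ = 1 := by rw [mul_one, h2]
    rw [hνd₁, mul_one] at h1
    exact h1
  set t := d₂ * d₁' with ht
  have hθt : θ t = 1 := by rw [ht, _root_.map_mul, hθd₂, hθd₁', mul_one]
  have hνt : σ t * t = 1 := by
    rw [ht, _root_.map_mul]
    calc σ d₂ * σ d₁' * (d₂ * d₁') = (σ d₂ * d₂) * (σ d₁' * d₁') := by ring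
    _ = 1 := by rw [hνd₂, hνd₁', mul_one]
  set aU : Aext R p ℓ := 1 + t with haU
  have hθaU : θ aU = 2 := by
    rw [haU, _root_.map_add, _root_.map_one, hθt, one_add_one_eq_two]
  have haUunit : IsUnit aU := hunit aU (by rw [hθaU]; exact h2F)
  obtain ⟨aU', haU'⟩ := haUunit.exists_right_inv
  have hkey : σ aU * t = aU := by
    rw [haU, _root_.map_add, _root_.map_one]
    calc (1 + σ t) * t = t + σ t * t := by ring
    _ = 1 + t := by rw [hνt]; ring
  set coeff : (Fin n ⊕ Fin n) → Aext R p ℓ := fun s =>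
    if s = Sum.inl i1 then aU else if s = Sum.inr i1 then σ aU' else 1 with hcoeff
  set coeff' : (Fin n ⊕ Fin n) → Aext R p ℓ := fun s =>
    if s = Sum.inl i1 then aU' else if s = Sum.inr i1 then σ aU else 1 with hcoeff'
  set kmap : V →ₗ[Aext R p ℓ] V := Module.Basis.constr b ℕ (fun s => coeff s • b s) with hkmap
  set kmap' : V →ₗ[Aext R p ℓ] V := Module.Basis.constr b ℕ (fun s => coeff' s • b s) with hkmap'
  have hcoeffmul : ∀ s, coeff s * coeff' s = 1 := by
    intro s
    simp only [hcoeff, hcoeff']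
    by_cases h1 : s = Sum.inl i1
    · rw [if_pos h1, if_pos h1]; exact haU'
    · by_cases h2 : s = Sum.inr i1
      · rw [if_neg h1, if_pos h2, if_neg h1, if_pos h2, ← _root_.map_mul, mul_comm aU' aU, haU',
          _root_.map_one]
      · rw [if_neg h1, if_neg h2, if_neg h1, if_neg h2, one_mul]
  have hcomp1 : kmap ∘ₗ kmap' = LinearMap.id := by
    apply Module.Basis.ext b
    intro i
    simp only [LinearMap.comp_apply, hkmap, hkmap', Module.Basis.constr_basis, _root_.map_smul,
      LinearMap.id_apply]
    rw [smul_smul, mul_comm (coeff' i) (coeff i), hcoeffmul, one_smul]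
  have hcomp2 : kmap' ∘ₗ kmap = LinearMap.id := by
    apply Module.Basis.ext b
    intro i
    simp only [LinearMap.comp_apply, hkmap, hkmap', Module.Basis.constr_basis, _root_.map_smul,
      LinearMap.id_apply]
    rw [smul_smul, mul_comm (coeff i) (coeff' i), mul_comm (coeff' i) (coeff i), hcoeffmul,
      one_smul]
  set kequiv : V ≃ₗ[Aext R p ℓ] V := LinearEquiv.ofLinear kmap kmap' hcomp1 hcomp2 with hkeq
  have hkeqapp : ∀ x : V, kequiv x = kmap x := fun x => rfl
  have hc1 : coeff (Sum.inl i1) = aU := by simp [hcoeff]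
  have hc2 : coeff (Sum.inr i1) = σ aU' := by simp [hcoeff]
  have hc3 : ∀ i : Fin n, i ≠ i1 → coeff (Sum.inl i) = 1 := by
    intro i hne; simp [hcoeff, hne]
  have hc4 : ∀ i : Fin n, i ≠ i1 → coeff (Sum.inr i) = 1 := by
    intro i hne; simp [hcoeff, hne]
  have hcc : ∀ i k : Fin n ⊕ Fin n, σ (coeff i) * coeff k * h (b i) (b k) = h (b i) (b k) := by
    have hmain : ∀ i : Fin n, σ (coeff (Sum.inl i)) * coeff (Sum.inr i) = 1 := by
      intro i
      rcases eq_or_ne i i1 with rfl | hne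
      · rw [hc1, hc2, ← _root_.map_mul, haU', _root_.map_one]
      · rw [hc3 i hne, hc4 i hne, _root_.map_one, one_mul]
    have hmain' : ∀ i : Fin n, σ (coeff (Sum.inr i)) * coeff (Sum.inl i) = 1 := by
      intro i
      rcases eq_or_ne i i1 with rfl | hne
      · rw [hc1, hc2, hσσ, mul_comm]
        exact haU'
      · rw [hc3 i hne, hc4 i hne, _root_.map_one, one_mul]
    intro i k
    rcases i with i | i <;> rcases k with k | k
    · rw [hb2]; ring
    · rw [hb1]
      rcases eq_or_ne i k with rfl | hne
      · rw [if_pos rfl, mul_one, hmain i]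
      · rw [if_neg hne, mul_zero]
    · rw [hsk (b (Sum.inl k)) (b (Sum.inr i)), hb1]
      rcases eq_or_ne k i with rfl | hne
      · rw [if_pos rfl, _root_.map_one]
        calc σ (coeff (Sum.inr k)) * coeff (Sum.inl k) * -1
            = -(σ (coeff (Sum.inr k)) * coeff (Sum.inl k)) := by ring
        _ = -1 := by rw [hmain' _]
      · rw [if_neg hne, _root_.map_zero, neg_zero, mul_zero]
    · rw [hb3]; ring
  have hkx : ∀ x : V, kmap x = ∑ i, (coeff i * b.repr x i) • b i := by
    intro x
    conv_lhs => rw [← Module.Basis.sum_repr b x]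
    rw [_root_.map_sum]
    refine Finset.sum_congr rfl fun i _ => ?_
    simp only [_root_.map_smul, hkmap, Module.Basis.constr_basis]
    rw [smul_smul, mul_comm (b.repr x i) (coeff i)]
  have hkh : ∀ x y : V, h (kequiv x) (kequiv y) = h x y := by
    intro x y
    rw [hkeqapp, hkeqapp, hkx, hkx]
    have h1 := hsum' (fun i => coeff i * b.repr x i) (fun k => coeff k * b.repr y k)
    rw [h1]
    have h2 := hsum' (fun i => b.repr x i) (fun k => b.repr y k)
    rw [Module.Basis.sum_repr, Module.Basis.sum_repr] at h2
    rw [h2]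
    refine Finset.sum_congr rfl fun i _ => Finset.sum_congr rfl fun k _ => ?_
    calc σ (coeff i * b.repr x i) * (coeff k * b.repr y k * h (b i) (b k))
        = σ (b.repr x i) * (b.repr y k * (σ (coeff i) * coeff k * h (b i) (b k))) := by
          rw [_root_.map_mul]; ring
      _ = σ (b.repr x i) * (b.repr y k * h (b i) (b k)) := by rw [hcc i k]
  have hkw : kequiv w = w := by
    rw [hkeqapp]
    have e0 : coeff (Sum.inl i0) = 1 := by simp [hcoeff, hi01]
    have e0' : coeff (Sum.inr i0) = 1 := by simp [hcoeff, hi01]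
    rw [hw, _root_.map_add, _root_.map_smul]
    simp only [hkmap, Module.Basis.constr_basis]
    rw [e0, e0', one_smul, one_smul]
  have hkmat : LinearMap.toMatrix b b kmap = Matrix.diagonal coeff := by
    ext i j
    rw [LinearMap.toMatrix_apply]
    simp only [hkmap, Module.Basis.constr_basis]
    rw [_root_.map_smul, Module.Basis.repr_self, Finsupp.smul_apply, smul_eq_mul]
    rcases eq_or_ne i j with rfl | hne
    · rw [Finsupp.single_eq_same, mul_one, Matrix.diagonal_apply_eq]
    · rw [Finsupp.single_eq_of_ne hne, mul_zero, Matrix.diagonal_apply_ne _ hne]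
  have hdetkmap : LinearMap.det kmap = aU * σ aU' := by
    rw [← LinearMap.det_toMatrix b, hkmat, Matrix.det_diagonal, Fintype.prod_sum_type]
    have h1 : ∀ i : Fin n, coeff (Sum.inl i) = if i = i1 then aU else 1 := by
      intro i
      rcases eq_or_ne i i1 with rfl | hne
      · rw [hc1, if_pos rfl]
      · rw [hc3 i hne, if_neg hne]
    have h2 : ∀ i : Fin n, coeff (Sum.inr i) = if i = i1 then σ aU' else 1 := by
      intro i
      rcases eq_or_ne i i1 with rfl | hne
      · rw [hc2, if_pos rfl]
      · rw [hc4 i hne, if_neg hne]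
    rw [Finset.prod_congr rfl fun i _ => h1 i, Finset.prod_congr rfl fun i _ => h2 i,
      Finset.prod_ite_eq' Finset.univ i1 (fun _ => aU),
      Finset.prod_ite_eq' Finset.univ i1 (fun _ => σ aU'),
      if_pos (Finset.mem_univ i1), if_pos (Finset.mem_univ i1)]
  have hdetk : LinearMap.det (kequiv : V →ₗ[Aext R p ℓ] V) = t := by
    have hco : (kequiv : V →ₗ[Aext R p ℓ] V) = kmap := rfl
    rw [hco, hdetkmap]
    calc aU * σ aU' = σ aU * t * σ aU' := by rw [hkey]
    _ = t * σ (aU * aU') := by rw [_root_.map_mul]; ring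
    _ = t := by rw [haU', _root_.map_one, mul_one]
  have hg₂symm : ∀ x y : V, h (g₂.symm x) (g₂.symm y) = h x y := by
    intro x y
    rw [← hg₂h (g₂.symm x) (g₂.symm y), LinearEquiv.apply_symm_apply,
      LinearEquiv.apply_symm_apply]
  refine ⟨g₁.trans (kequiv.trans g₂.symm), ?_, ?_, ?_⟩
  · intro x y
    simp only [LinearEquiv.trans_apply]
    rw [hg₂symm, hkh, hg₁h]
  · have hco : ((g₁.trans (kequiv.trans g₂.symm)) : V →ₗ[Aext R p ℓ] V)
        = ((g₂.symm : V →ₗ[Aext R p ℓ] V).comp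
            ((kequiv : V →ₗ[Aext R p ℓ] V).comp (g₁ : V →ₗ[Aext R p ℓ] V))) := by
      ext x
      simp
    rw [hco, LinearMap.det_comp, LinearMap.det_comp, hdetk, ← hd₂', ← hd₁, ht]
    calc d₂' * (d₂ * d₁' * d₁) = (d₂' * d₂) * (d₁' * d₁) := by ring
    _ = 1 := by rw [hinv₂, hinv₁, mul_one]
  · simp only [LinearEquiv.trans_apply]
    rw [hg₁u, hkw, ← hg₂v, LinearEquiv.symm_apply_apply]
end
end

section
/- Suppose ℓ > 1 and let V̄ = V/r^{2ℓ-3}V over Ā = A/r^{2ℓ-3}. Then the map Δ : r^2 V → V̄ given by π^2 v ↦ v̄ is a well-defined bijective isometry from (r^2 V, h') to (V̄, h̄), where h'(π^2 v, π^2 w) = h(v,w) + r^{2ℓ-3} and h̄(v̄,w̄) = h(v,w) + r^{2ℓ-3}; moreover Δ is equivariant for the actions of U(V,h) on r^2 V and V̄. -/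
set_option linter.unusedSectionVars false
set_option maxHeartbeats 1000000


open Polynomial

noncomputable section

variable (R : Type) [CommRing R] [IsLocalRing R] [IsPrincipalIdealRing R] [Finite R]
variable (p : R) (ℓ q : ℕ)

variable {R p ℓ}

lemma chainR (hmax : IsLocalRing.maximalIdeal R = Ideal.span {p})
    (hnil : Ideal.span {p} ^ ℓ = (⊥ : Ideal R))
    (hnil' : Ideal.span {p} ^ (ℓ - 1) ≠ (⊥ : Ideal R))
    {k : ℕ} (hk : k ≤ ℓ - 1) {b : R} (hb : p * b ∈ Ideal.span {p ^ (k + 1)}) :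
    b ∈ Ideal.span {p ^ k} := by
  by_cases hb0 : b = 0
  · simp [hb0]
  have hex : ∃ m, b ∉ Ideal.span {p ^ m} := by
    refine ⟨ℓ, ?_⟩
    rw [← Ideal.span_singleton_pow, hnil]
    simpa using hb0
  classical
  set m := Nat.find hex with hm
  have hmspec : b ∉ Ideal.span {p ^ m} := Nat.find_spec hex
  have hm1 : 1 ≤ m := by
    rcases Nat.eq_zero_or_pos m with h0 | h; · exfalso; apply hmspec; rw [h0]; simp
    exact h
  have hmem : b ∈ Ideal.span {p ^ (m - 1)} := by
    by_contra hc
    exact absurd (Nat.find_min hex (by omega : m - 1 < m)) (by simpa using hc)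
  have hsucc : ∀ j : ℕ, 1 ≤ j → p ^ j = p * p ^ (j - 1) := by
    intro j hj
    conv_lhs => rw [show j = (j - 1) + 1 by omega]
    rw [pow_succ]; ring
  by_cases hcase : k ≤ m - 1
  · exact Ideal.span_singleton_le_span_singleton.mpr (pow_dvd_pow p hcase) hmem
  · -- m ≤ k
    have hmk : m ≤ k := by omega
    obtain ⟨u, hu⟩ := Ideal.mem_span_singleton'.mp hmem
    -- hu : u * p ^ (m-1) = b
    have hunit : IsUnit u := by
      by_contra hnu
      apply hmspec
      have : u ∈ IsLocalRing.maximalIdeal R := hnu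
      rw [hmax, Ideal.mem_span_singleton] at this
      obtain ⟨c, hc⟩ := this
      rw [Ideal.mem_span_singleton, ← hu, hc]
      exact ⟨c, by rw [hsucc m hm1]; ring⟩
    -- p * b = u * p ^ m
    have hpm' : p ^ m = p * p ^ (m - 1) := hsucc m hm1
    have hpb : p * b = u * p ^ m := by
      rw [← hu, hpm']; ring
    rw [hpb, Ideal.mem_span_singleton] at hb
    obtain ⟨v, hv⟩ := isUnit_iff_exists_inv.mp hunit
    obtain ⟨d, hd⟩ := hb
    have hc : p ^ m = p ^ (k + 1) * (v * d) := by
      calc p ^ m = u * v * p ^ m := by rw [hv, one_mul]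
        _ = v * (u * p ^ m) := by ring
        _ = p ^ (k + 1) * (v * d) := by rw [hd]; ring
    set c := v * d with hcd
    have hsplit : p ^ (k + 1) = p ^ m * p ^ (k + 1 - m) := by
      rw [← pow_add]; congr 1; omega
    have hz : p ^ m * (1 - p ^ (k + 1 - m) * c) = 0 := by
      have := hc
      rw [hsplit] at this
      linear_combination this
    have hun : IsUnit (1 - p ^ (k + 1 - m) * c) := by
      have hmem' : p ^ (k + 1 - m) * c ∈ IsLocalRing.maximalIdeal R := by
        rw [hmax, Ideal.mem_span_singleton]
        exact Dvd.dvd.mul_right (dvd_pow_self p (by omega)) c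
      exact IsLocalRing.isUnit_one_sub_self_of_mem_nonunits _ hmem'
    have hpm : p ^ m = 0 := by
      obtain ⟨w, hw⟩ := hun
      calc p ^ m = p ^ m * (1 - p ^ (k+1-m) * c) * w.inv := by
            rw [← hw]; simp [Units.mul_inv_cancel_right]
        _ = 0 := by rw [hz]; ring
    apply absurd _ hnil'
    rw [Ideal.span_singleton_pow]
    have : p ^ (ℓ - 1) = 0 := by
      calc p ^ (ℓ - 1) = p ^ m * p ^ (ℓ - 1 - m) := by rw [← pow_add]; congr 1; omega
        _ = 0 := by rw [hpm]; ring
    rw [this, Ideal.span_singleton_eq_bot.mpr rfl]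


/-- coefficient extraction targets -/
def eAux : ℕ → R × (R ⧸ Ideal.span {p ^ (ℓ - 1)}) := fun n =>
  if Even n then (p ^ (n / 2), 0)
  else (0, Ideal.Quotient.mk (Ideal.span {p ^ (ℓ - 1)}) (p ^ (n / 2)))

lemma eAux_step (n : ℕ) : eAux (n + 2) = p • (eAux n : R × (R ⧸ Ideal.span {p ^ (ℓ - 1)})) := by
  unfold eAux
  have h2 : (n + 2) / 2 = n / 2 + 1 := by omega
  have he : Even (n + 2) ↔ Even n := by simp [Nat.even_add]
  by_cases hn : Even n
  · rw [if_pos (he.mpr hn), if_pos hn, h2, pow_succ, Prod.smul_def]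
    simp [mul_comm]
  · rw [if_neg (fun hh => hn (he.mp hh)), if_neg hn, h2, pow_succ, Prod.smul_def]
    refine Prod.ext (by simp) ?_
    show Ideal.Quotient.mk _ (p ^ (n / 2) * p) = p • Ideal.Quotient.mk _ (p ^ (n / 2))
    rw [Algebra.smul_def, Ideal.Quotient.algebraMap_eq, ← map_mul]
    ring_nf

lemma eAux_zero (hnil : Ideal.span {p} ^ ℓ = (⊥ : Ideal R)) {m : ℕ} (hm : 2 * ℓ - 1 ≤ m)
    (hℓ : 1 ≤ ℓ) : eAux m = (0 : R × (R ⧸ Ideal.span {p ^ (ℓ - 1)})) := by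
  have hpl : p ^ ℓ = 0 := by
    have : p ^ ℓ ∈ Ideal.span {p} ^ ℓ := by
      rw [Ideal.span_singleton_pow]; exact Ideal.mem_span_singleton_self _
    rw [hnil] at this; simpa using this
  unfold eAux
  by_cases hme : Even m
  · rw [if_pos hme]
    have hge : ℓ ≤ m / 2 := by rcases hme with ⟨r, hr⟩; omega
    have : p ^ (m / 2) = 0 := by
      rw [show m / 2 = ℓ + (m / 2 - ℓ) by omega, pow_add, hpl, zero_mul]
    rw [this]; rfl
  · rw [if_neg hme]
    have hge : ℓ - 1 ≤ m / 2 := by omega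
    have : p ^ (m / 2) ∈ Ideal.span {p ^ (ℓ - 1)} := by
      rw [Ideal.mem_span_singleton]; exact pow_dvd_pow p hge
    refine Prod.ext rfl ?_
    exact Ideal.Quotient.eq_zero_iff_mem.mpr this

/-- the linear coefficient-extraction map -/
def Ltil : Polynomial R →ₗ[R] R × (R ⧸ Ideal.span {p ^ (ℓ - 1)}) :=
  Polynomial.lsum (fun n => LinearMap.toSpanSingleton R _ (eAux n))

lemma Ltil_monomial (n : ℕ) (a : R) :
    Ltil (monomial n a) = a • (eAux n : R × (R ⧸ Ideal.span {p ^ (ℓ - 1)})) := by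
  unfold Ltil
  rw [lsum_apply, sum_monomial_index]
  · rfl
  · simp

lemma Ltil_ker (hnil : Ideal.span {p} ^ ℓ = (⊥ : Ideal R)) (hℓ : 1 ≤ ℓ)
    {f : Polynomial R}
    (hf : f ∈ Ideal.span ({X ^ 2 - C p, X ^ (2 * ℓ - 1)} : Set (Polynomial R))) :
    Ltil f = (0 : R × (R ⧸ Ideal.span {p ^ (ℓ - 1)})) := by
  rw [Ideal.span_insert, Submodule.mem_sup] at hf
  obtain ⟨y, hy, z, hz, rfl⟩ := hf
  rw [Ideal.mem_span_singleton] at hy hz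
  obtain ⟨a, rfl⟩ := hy
  obtain ⟨c, rfl⟩ := hz
  rw [map_add]
  have h1 : ∀ g : Polynomial R, Ltil ((X ^ 2 - C p) * g) = (0 : R × (R ⧸ Ideal.span {p ^ (ℓ - 1)})) := by
    intro g
    induction g using Polynomial.induction_on' with
    | add f g hf hg => rw [mul_add, map_add, hf, hg, add_zero]
    | monomial n cc =>
      have : (X ^ 2 - C p) * monomial n cc = monomial (n + 2) cc - monomial n (p * cc) := by
        rw [sub_mul, ← C_mul_X_pow_eq_monomial, ← C_mul_X_pow_eq_monomial,
          ← C_mul_X_pow_eq_monomial]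
        rw [C_mul]; ring
      rw [this, map_sub, Ltil_monomial, Ltil_monomial, eAux_step, smul_smul,
        mul_comm cc p, sub_self]
  have h2 : Ltil (X ^ (2 * ℓ - 1) * c) = (0 : R × (R ⧸ Ideal.span {p ^ (ℓ - 1)})) := by
    induction c using Polynomial.induction_on' with
    | add f g hf hg => rw [mul_add, map_add, hf, hg, add_zero]
    | monomial n cc =>
      have : (X : Polynomial R) ^ (2 * ℓ - 1) * monomial n cc = monomial (n + (2 * ℓ - 1)) cc := by
        rw [← C_mul_X_pow_eq_monomial, ← C_mul_X_pow_eq_monomial, pow_add]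
        ring
      rw [this, Ltil_monomial, eAux_zero hnil (by omega) hℓ, smul_zero]
  rw [h1, h2, add_zero]

lemma piA_sq (R : Type) [CommRing R] (p : R) (ℓ : ℕ) :
    piA R p ℓ ^ 2 = Ideal.Quotient.mk _ (C p) := by
  rw [piA, ← map_pow, Ideal.Quotient.mk_eq_mk_iff_sub_mem]
  exact Ideal.subset_span (by simp)

lemma piA_top (R : Type) [CommRing R] (p : R) (ℓ : ℕ) :
    piA R p ℓ ^ (2 * ℓ - 1) = 0 := by
  rw [piA, ← map_pow, Ideal.Quotient.eq_zero_iff_mem]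
  exact Ideal.subset_span (by simp)

lemma surjA (R : Type) [CommRing R] (p : R) (ℓ : ℕ) (c : Aext R p ℓ) :
    ∃ a b : R, c = Ideal.Quotient.mk _ (C a + C b * X) := by
  set J := Ideal.span ({X ^ 2 - C p, X ^ (2 * ℓ - 1)} : Set (Polynomial R)) with hJ
  have key : ∀ n : ℕ, ∃ a b : R, (piA R p ℓ) ^ n = Ideal.Quotient.mk J (C a + C b * X) := by
    intro n
    induction n using Nat.strong_induction_on with
    | _ n ih =>
      match n with
      | 0 => exact ⟨1, 0, by simp⟩
      | 1 => refine ⟨0, 1, ?_⟩; rw [pow_one, piA]; congr 1; simp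
      | (m + 2) =>
        obtain ⟨a, b, hab⟩ := ih m (by omega)
        refine ⟨p * a, p * b, ?_⟩
        have : (piA R p ℓ) ^ (m + 2) = piA R p ℓ ^ 2 * piA R p ℓ ^ m := by ring
        rw [this, hab, piA_sq, ← map_mul]
        congr 1
        rw [C_mul, C_mul]
        ring
  obtain ⟨f, rfl⟩ := Ideal.Quotient.mk_surjective c
  induction f using Polynomial.induction_on' with
  | add f g hf hg =>
    obtain ⟨a1, b1, h1⟩ := hf
    obtain ⟨a2, b2, h2⟩ := hg
    refine ⟨a1 + a2, b1 + b2, ?_⟩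
    rw [map_add, h1, h2, ← map_add]
    congr 1
    rw [C_add, C_add]
    ring
  | monomial n cc =>
    obtain ⟨a, b, hab⟩ := key n
    refine ⟨cc * a, cc * b, ?_⟩
    have hmon : (monomial n cc : Polynomial R) = C cc * X ^ n := by
      rw [← C_mul_X_pow_eq_monomial]
    have hXn : (Ideal.Quotient.mk J) (X ^ n : Polynomial R) = piA R p ℓ ^ n := by
      rw [piA, map_pow]
    rw [hmon, map_mul, hXn, hab, ← map_mul]
    congr 1
    rw [C_mul, C_mul]
    ring

lemma keyA (hmax : IsLocalRing.maximalIdeal R = Ideal.span {p})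
    (hnil : Ideal.span {p} ^ ℓ = (⊥ : Ideal R))
    (hnil' : Ideal.span {p} ^ (ℓ - 1) ≠ (⊥ : Ideal R))
    (hℓ1 : 1 < ℓ) (c : Aext R p ℓ) (hc : c * piA R p ℓ ^ 2 = 0) :
    c ∈ Ideal.span {piA R p ℓ ^ (2 * ℓ - 3)} := by
  obtain ⟨a, b, rfl⟩ := surjA R p ℓ c
  set J := Ideal.span ({X ^ 2 - C p, X ^ (2 * ℓ - 1)} : Set (Polynomial R)) with hJ
  have hmem : (C a + C b * X) * X ^ 2 ∈ J := by
    rw [← Ideal.Quotient.eq_zero_iff_mem, map_mul]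
    have hx2 : Ideal.Quotient.mk J ((X : Polynomial R) ^ 2) = piA R p ℓ ^ 2 := by
      rw [piA, map_pow]
    rw [hx2]
    exact hc
  have hL := Ltil_ker hnil (by omega) hmem
  have hcomp : (C a + C b * X) * X ^ 2 = monomial 2 a + monomial 3 b := by
    rw [← C_mul_X_pow_eq_monomial, ← C_mul_X_pow_eq_monomial]
    ring
  rw [hcomp, map_add, Ltil_monomial, Ltil_monomial] at hL
  have he2 : (eAux 2 : R × (R ⧸ Ideal.span {p ^ (ℓ - 1)})) = (p ^ 1, 0) := by
    unfold eAux; rw [if_pos (by decide)]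
  have he3 : (eAux 3 : R × (R ⧸ Ideal.span {p ^ (ℓ - 1)})) =
      (0, Ideal.Quotient.mk _ (p ^ 1)) := by
    unfold eAux; rw [if_neg (by decide)]
  rw [he2, he3] at hL
  have hL1 : a * p = 0 := by
    have := congrArg Prod.fst hL
    simpa using this
  have hL2 : b * p ∈ Ideal.span {p ^ (ℓ - 1)} := by
    have h2 := congrArg Prod.snd hL
    simp only [Prod.snd_add, Prod.smul_snd, smul_zero, zero_add, Prod.snd_zero] at h2
    have hbp : Ideal.Quotient.mk (Ideal.span {p ^ (ℓ - 1)}) (b * p) =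
        b • Ideal.Quotient.mk (Ideal.span {p ^ (ℓ - 1)}) (p ^ 1) := by
      rw [pow_one, Algebra.smul_def, Ideal.Quotient.algebraMap_eq, ← map_mul]
    rw [← Ideal.Quotient.eq_zero_iff_mem, hbp, h2]
  have ha : a ∈ Ideal.span {p ^ (ℓ - 1)} := by
    refine chainR hmax hnil hnil' (le_refl (ℓ - 1)) ?_
    rw [show ℓ - 1 + 1 = ℓ by omega, mul_comm, hL1]
    exact Ideal.zero_mem _
  have hb : b ∈ Ideal.span {p ^ (ℓ - 2)} := by
    refine chainR hmax hnil hnil' (by omega) ?_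
    rw [show ℓ - 2 + 1 = ℓ - 1 by omega, mul_comm]
    exact hL2
  obtain ⟨a1, ha1⟩ := Ideal.mem_span_singleton.mp ha
  obtain ⟨b1, hb1⟩ := Ideal.mem_span_singleton.mp hb
  refine Ideal.mem_span_singleton.mpr
    ⟨piA R p ℓ * Ideal.Quotient.mk J (C a1) + Ideal.Quotient.mk J (C b1), ?_⟩
  have hπ : piA R p ℓ = Ideal.Quotient.mk J X := rfl
  have e1 : piA R p ℓ ^ (2 * ℓ - 2) = Ideal.Quotient.mk J (C (p ^ (ℓ - 1))) := by
    rw [show 2 * ℓ - 2 = 2 * (ℓ - 1) by omega, pow_mul, piA_sq, ← map_pow, ← C_pow]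
  have e2 : piA R p ℓ ^ (2 * ℓ - 3) = Ideal.Quotient.mk J (C (p ^ (ℓ - 2))) * piA R p ℓ := by
    rw [show 2 * ℓ - 3 = 2 * (ℓ - 2) + 1 by omega, pow_succ, pow_mul, piA_sq, ← map_pow, ← C_pow]
  have hpow : piA R p ℓ ^ (2 * ℓ - 3) * piA R p ℓ = piA R p ℓ ^ (2 * ℓ - 2) := by
    rw [← pow_succ]
    congr 1
    omega
  have step : piA R p ℓ ^ (2 * ℓ - 3) *
      (piA R p ℓ * Ideal.Quotient.mk J (C a1) + Ideal.Quotient.mk J (C b1)) =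
      Ideal.Quotient.mk J (C (p ^ (ℓ - 1)) * C a1 + C (p ^ (ℓ - 2)) * C b1 * X) := by
    rw [mul_add, ← mul_assoc, hpow, e1, e2, hπ]
    simp only [← map_mul, ← map_add]
    congr 1
    simp only [C_mul]
    ring
  rw [step]
  congr 1
  rw [ha1, hb1]
  simp only [C_mul]

section Modules

variable {V : Type} [AddCommGroup V] [Module (Aext R p ℓ) V]

lemma zerN (hℓ1 : 1 < ℓ) {v : V}
    (hv : v ∈ (Ideal.span {piA R p ℓ} ^ (2 * ℓ - 3) • (⊤ : Submodule (Aext R p ℓ) V) :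
      Submodule (Aext R p ℓ) V)) :
    piA R p ℓ ^ 2 • v = 0 := by
  refine Submodule.smul_induction_on hv ?_ ?_
  · intro a ha x _
    rw [Ideal.span_singleton_pow, Ideal.mem_span_singleton] at ha
    obtain ⟨c, rfl⟩ := ha
    rw [smul_smul]
    have hh : piA R p ℓ ^ 2 * (piA R p ℓ ^ (2 * ℓ - 3) * c) = piA R p ℓ ^ (2 * ℓ - 1) * c := by
      rw [← mul_assoc, ← pow_add]
      congr 2
      omega
    rw [hh, piA_top, zero_mul]
    exact zero_smul (Aext R p ℓ) x
  · intro x y hx hy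
    rw [smul_add, hx, hy, add_zero]

lemma surj2 (x : V)
    (hx : x ∈ (Ideal.span {piA R p ℓ} ^ 2 • (⊤ : Submodule (Aext R p ℓ) V) :
      Submodule (Aext R p ℓ) V)) :
    ∃ v : V, x = piA R p ℓ ^ 2 • v := by
  refine Submodule.smul_induction_on hx ?_ ?_
  · intro a ha y _
    rw [Ideal.span_singleton_pow, Ideal.mem_span_singleton] at ha
    obtain ⟨c, rfl⟩ := ha
    exact ⟨c • y, by rw [smul_smul]⟩
  · rintro x y ⟨v, rfl⟩ ⟨w, rfl⟩
    exact ⟨v + w, by rw [smul_add]⟩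

lemma memN (hmax : IsLocalRing.maximalIdeal R = Ideal.span {p})
    (hnil : Ideal.span {p} ^ ℓ = (⊥ : Ideal R))
    (hnil' : Ideal.span {p} ^ (ℓ - 1) ≠ (⊥ : Ideal R))
    (hℓ1 : 1 < ℓ) {ι : Type} [Fintype ι] (b : Module.Basis ι (Aext R p ℓ) V) (v : V)
    (hv : piA R p ℓ ^ 2 • v = 0) :
    v ∈ (Ideal.span {piA R p ℓ} ^ (2 * ℓ - 3) • (⊤ : Submodule (Aext R p ℓ) V) :
      Submodule (Aext R p ℓ) V) := by
  have hcoef : ∀ i, b.repr v i * piA R p ℓ ^ 2 = 0 := by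
    intro i
    have h1 : b.repr (piA R p ℓ ^ 2 • v) = piA R p ℓ ^ 2 • b.repr v := by
      rw [map_smul]
    rw [hv, map_zero] at h1
    have := congrArg (fun f => f i) h1.symm
    simpa [mul_comm] using this
  rw [← b.sum_repr v]
  refine Submodule.sum_mem _ ?_
  intro i _
  refine Submodule.smul_mem_smul ?_ Submodule.mem_top
  rw [Ideal.span_singleton_pow]
  exact keyA hmax hnil hnil' hℓ1 _ (hcoef i)

end Modules

variable (R p ℓ)

theorem stmt19
    (hℓ : 1 ≤ ℓ)
    (hmax : IsLocalRing.maximalIdeal R = Ideal.span {p})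
    (hnil : Ideal.span {p} ^ ℓ = (⊥ : Ideal R))
    (hnil' : Ideal.span {p} ^ (ℓ - 1) ≠ (⊥ : Ideal R))
    (hq : Nat.card (IsLocalRing.ResidueField R) = q)
    (hodd : Odd q)
    (σ : Aext R p ℓ →ₐ[R] Aext R p ℓ)
    (hσ : σ (piA R p ℓ) = - piA R p ℓ)
    (V : Type) [AddCommGroup V] [Module (Aext R p ℓ) V] [Module R V]
    [IsScalarTower R (Aext R p ℓ) V]
    (n : ℕ) (hn : 1 ≤ n)
    (b : Module.Basis (Fin n ⊕ Fin n) (Aext R p ℓ) V)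
    (h : V → V → Aext R p ℓ)
    (hadd : ∀ v v' w : V, h (v + v') w = h v w + h v' w)
    (hs1 : ∀ (a : Aext R p ℓ) (v w : V), h (a • v) w = σ a * h v w)
    (hs2 : ∀ (a : Aext R p ℓ) (v w : V), h v (a • w) = a * h v w)
    (hsk : ∀ v w : V, h w v = - σ (h v w))
    (hb1 : ∀ i j, h (b (Sum.inl i)) (b (Sum.inr j)) = if i = j then 1 else 0)
    (hb2 : ∀ i j, h (b (Sum.inl i)) (b (Sum.inl j)) = 0)
    (hb3 : ∀ i j, h (b (Sum.inr i)) (b (Sum.inr j)) = 0)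
    (hℓ1 : 1 < ℓ) :
    ∃ h' : (Ideal.span {piA R p ℓ} ^ 2 • (⊤ : Submodule (Aext R p ℓ) V) :
          Submodule (Aext R p ℓ) V) →
        (Ideal.span {piA R p ℓ} ^ 2 • (⊤ : Submodule (Aext R p ℓ) V) :
          Submodule (Aext R p ℓ) V) →
        Aext R p ℓ ⧸ Ideal.span {piA R p ℓ} ^ (2 * ℓ - 3),
    ∃ hbar : (V ⧸ (Ideal.span {piA R p ℓ} ^ (2 * ℓ - 3) • (⊤ : Submodule (Aext R p ℓ) V) :
          Submodule (Aext R p ℓ) V)) →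
        (V ⧸ (Ideal.span {piA R p ℓ} ^ (2 * ℓ - 3) • (⊤ : Submodule (Aext R p ℓ) V) :
          Submodule (Aext R p ℓ) V)) →
        Aext R p ℓ ⧸ Ideal.span {piA R p ℓ} ^ (2 * ℓ - 3),
    ∃ Δ : (Ideal.span {piA R p ℓ} ^ 2 • (⊤ : Submodule (Aext R p ℓ) V) :
          Submodule (Aext R p ℓ) V) →
        V ⧸ (Ideal.span {piA R p ℓ} ^ (2 * ℓ - 3) • (⊤ : Submodule (Aext R p ℓ) V) :
          Submodule (Aext R p ℓ) V),
      (∀ (v w : V) (hv : piA R p ℓ ^ 2 • v ∈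
          (Ideal.span {piA R p ℓ} ^ 2 • (⊤ : Submodule (Aext R p ℓ) V) :
            Submodule (Aext R p ℓ) V))
          (hw : piA R p ℓ ^ 2 • w ∈
          (Ideal.span {piA R p ℓ} ^ 2 • (⊤ : Submodule (Aext R p ℓ) V) :
            Submodule (Aext R p ℓ) V)),
        h' ⟨piA R p ℓ ^ 2 • v, hv⟩ ⟨piA R p ℓ ^ 2 • w, hw⟩ =
          Ideal.Quotient.mk (Ideal.span {piA R p ℓ} ^ (2 * ℓ - 3)) (h v w)) ∧
      (∀ v w : V,
        hbar (Submodule.Quotient.mk v) (Submodule.Quotient.mk w) =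
          Ideal.Quotient.mk (Ideal.span {piA R p ℓ} ^ (2 * ℓ - 3)) (h v w)) ∧
      (∀ (v : V) (hv : piA R p ℓ ^ 2 • v ∈
          (Ideal.span {piA R p ℓ} ^ 2 • (⊤ : Submodule (Aext R p ℓ) V) :
            Submodule (Aext R p ℓ) V)),
        Δ ⟨piA R p ℓ ^ 2 • v, hv⟩ = Submodule.Quotient.mk v) ∧
      Function.Bijective Δ ∧
      (∀ x y, hbar (Δ x) (Δ y) = h' x y) ∧
      (∀ g : V ≃ₗ[Aext R p ℓ] V, (∀ x y : V, h (g x) (g y) = h x y) →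
        ∀ (x : (Ideal.span {piA R p ℓ} ^ 2 • (⊤ : Submodule (Aext R p ℓ) V) :
            Submodule (Aext R p ℓ) V))
          (hgx : g (x : V) ∈
            (Ideal.span {piA R p ℓ} ^ 2 • (⊤ : Submodule (Aext R p ℓ) V) :
              Submodule (Aext R p ℓ) V))
          (v : V), Δ x = Submodule.Quotient.mk v →
            Δ ⟨g (x : V), hgx⟩ = Submodule.Quotient.mk (g v)) := by
  classical
  set I : Ideal (Aext R p ℓ) := Ideal.span {piA R p ℓ} ^ (2 * ℓ - 3) with hI
  set N : Submodule (Aext R p ℓ) V := I • ⊤ with hN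
  set M : Submodule (Aext R p ℓ) V := Ideal.span {piA R p ℓ} ^ 2 • ⊤ with hM
  -- choice of representatives
  obtain ⟨rep, hrep⟩ := (Submodule.Quotient.mk_surjective N).hasRightInverse
  choose u hu using (fun x : M => surj2 (x : V) x.2)
  -- basic properties of h
  have h0l : ∀ w : V, h 0 w = 0 := by
    intro w
    have h0 := hadd 0 0 w
    rw [add_zero] at h0
    exact left_eq_add.mp h0
  have hnegl : ∀ v w : V, h (-v) w = - h v w := by
    intro v w
    have hthis := hadd v (-v) w
    rw [add_neg_cancel, h0l] at hthis
    exact eq_neg_of_add_eq_zero_right hthis.symm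
  have hsubl : ∀ v v' w : V, h (v - v') w = h v w - h v' w := by
    intro v v' w
    rw [sub_eq_add_neg, hadd, hnegl]
    ring
  have haddr : ∀ w x y : V, h w (x + y) = h w x + h w y := by
    intro w x y
    rw [hsk (x + y) w, hadd, map_add, neg_add, ← hsk x w, ← hsk y w]
  have hnegr : ∀ w x : V, h w (-x) = - h w x := by
    intro w x
    rw [hsk (-x) w, hnegl, map_neg, hsk x w]
  have hsubr : ∀ w x y : V, h w (x - y) = h w x - h w y := by
    intro w x y
    rw [sub_eq_add_neg, haddr, hnegr]
    ring
  -- sigma preserves I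
  have hσI : ∀ a : Aext R p ℓ, a ∈ I → σ a ∈ I := by
    intro a ha
    rw [hI, Ideal.span_singleton_pow, Ideal.mem_span_singleton] at ha ⊢
    obtain ⟨c, rfl⟩ := ha
    rw [map_mul, map_pow, hσ]
    exact ⟨(-1) ^ (2 * ℓ - 3) * σ c, by rw [neg_pow (piA R p ℓ) (2 * ℓ - 3)]; ring⟩
  -- membership lemmas for h
  have hmem1 : ∀ v w : V, v ∈ N → h v w ∈ I := by
    intro v w hv
    rw [hN] at hv
    refine Submodule.smul_induction_on hv ?_ ?_
    · intro a ha x _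
      rw [hs1]
      exact Ideal.mul_mem_right _ _ (hσI a ha)
    · intro x y hx hy
      rw [hadd]
      exact Ideal.add_mem _ hx hy
  have hmem2 : ∀ v w : V, w ∈ N → h v w ∈ I := by
    intro v w hw
    rw [hN] at hw
    refine Submodule.smul_induction_on hw ?_ ?_
    · intro a ha x _
      rw [hs2]
      exact Ideal.mul_mem_right _ _ ha
    · intro x y hx hy
      rw [haddr]
      exact Ideal.add_mem _ hx hy
  have hbarwd : ∀ v v' w w' : V, v - v' ∈ N → w - w' ∈ N →
      Ideal.Quotient.mk I (h v w) = Ideal.Quotient.mk I (h v' w') := by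
    intro v v' w w' hv hw
    rw [Ideal.Quotient.mk_eq_mk_iff_sub_mem]
    have hid : h v w - h v' w' = h (v - v') w + h v' (w - w') := by
      rw [hsubl, hsubr]
      ring
    rw [hid]
    exact Ideal.add_mem _ (hmem1 _ _ hv) (hmem2 _ _ hw)
  -- definitions
  let Δ : M → V ⧸ N := fun x => Submodule.Quotient.mk (u x)
  let hbar : (V ⧸ N) → (V ⧸ N) → Aext R p ℓ ⧸ I :=
    fun x y => Ideal.Quotient.mk I (h (rep x) (rep y))
  let h' : M → M → Aext R p ℓ ⧸ I := fun x y => hbar (Δ x) (Δ y)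
  -- key properties
  have P3 : ∀ (v : V) (hv : piA R p ℓ ^ 2 • v ∈ M),
      Δ ⟨piA R p ℓ ^ 2 • v, hv⟩ = Submodule.Quotient.mk v := by
    intro v hv
    have hu' := hu ⟨piA R p ℓ ^ 2 • v, hv⟩
    show Submodule.Quotient.mk (u ⟨piA R p ℓ ^ 2 • v, hv⟩) = Submodule.Quotient.mk v
    rw [Submodule.Quotient.eq]
    rw [hN]
    apply memN hmax hnil hnil' hℓ1 b
    rw [smul_sub, ← hu']
    exact sub_self _
  have P2 : ∀ v w : V,
      hbar (Submodule.Quotient.mk v) (Submodule.Quotient.mk w) =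
        Ideal.Quotient.mk I (h v w) := by
    intro v w
    refine hbarwd _ _ _ _ ?_ ?_
    · exact (Submodule.Quotient.eq N).mp (hrep (Submodule.Quotient.mk v))
    · exact (Submodule.Quotient.eq N).mp (hrep (Submodule.Quotient.mk w))
  have gN : ∀ (g : V ≃ₗ[Aext R p ℓ] V) (v : V), v ∈ N → g v ∈ N := by
    intro g v hv
    rw [hN] at hv ⊢
    refine Submodule.smul_induction_on hv ?_ ?_
    · intro a ha x _
      rw [map_smul]
      exact Submodule.smul_mem_smul ha Submodule.mem_top
    · intro x y hx hy
      rw [map_add]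
      exact Submodule.add_mem _ hx hy
  refine ⟨h', hbar, Δ, ?_, P2, P3, ⟨?_, ?_⟩, fun x y => rfl, ?_⟩
  · -- P1
    intro v w hv hw
    show hbar (Δ ⟨piA R p ℓ ^ 2 • v, hv⟩) (Δ ⟨piA R p ℓ ^ 2 • w, hw⟩) = _
    rw [P3 v hv, P3 w hw]
    exact P2 v w
  · -- injective
    intro x y hxy
    have hd : u x - u y ∈ N := (Submodule.Quotient.eq N).mp hxy
    have hz : piA R p ℓ ^ 2 • (u x - u y) = 0 := by
      rw [hN] at hd
      exact zerN hℓ1 hd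
    rw [smul_sub, sub_eq_zero] at hz
    apply Subtype.ext
    rw [hu x, hu y, hz]
  · -- surjective
    intro y
    have hmemM : piA R p ℓ ^ 2 • rep y ∈ M := by
      rw [hM]
      exact Submodule.smul_mem_smul (Ideal.pow_mem_pow (Ideal.mem_span_singleton_self _) 2)
        Submodule.mem_top
    exact ⟨⟨piA R p ℓ ^ 2 • rep y, hmemM⟩, by rw [P3]; exact hrep y⟩
  · -- equivariance
    intro g hg x hgx v hΔv
    have hx := hu x
    have huv : u x - v ∈ N := (Submodule.Quotient.eq N).mp hΔv
    have hgx1 : g (x : V) = piA R p ℓ ^ 2 • g (u x) := by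
      rw [hx, map_smul]
    have hgx2 : piA R p ℓ ^ 2 • g (u x) ∈ M := hgx1 ▸ hgx
    have hsubty : (⟨g (x : V), hgx⟩ : M) = ⟨piA R p ℓ ^ 2 • g (u x), hgx2⟩ :=
      Subtype.ext hgx1
    rw [hsubty, P3 (g (u x)) hgx2, Submodule.Quotient.eq]
    have : (g (u x) : V) - g v = g (u x - v) := by rw [map_sub]
    rw [this]
    exact gN g _ huv

end
end
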